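/- arXiv:2412.08579 — 3 statements merged into one kernel-verified Lean document; each statement's English description precedes it below -/
import Mathlib

section
/- Let $x : [a,b] \to V$ be a continuous path of bounded variation into a finite-dimensional inner product space $V$. Then for every $k \ge 1$, the $k$-th level of the signature satisfies $\|S(x)^{(k)}\|_{V^{\otimes k}} \le \frac{\|x\|_{1,[a,b]}^k}{k!}$, where $S(x)^{(k)} = \int_{a<t_1<\cdots<t_k<b} dx_{t_1} \otimes \cdots \otimes dx_{t_k}$ and $\|x\|_{1,[a,b]}$ is the total variation of $x$. -/
open Filter

/-- Riemann–Stieltjes integral `∫_a^b f dg`, defined as the limit of left-endpoint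
Riemann–Stieltjes sums over uniform partitions (a junk value if no limit exists).
For `f` continuous and `g` of bounded variation this is the classical RS integral. -/
noncomputable def rsIntegral (f g : ℝ → ℝ) (a b : ℝ) : ℝ :=
  limUnder atTop fun N : ℕ =>
    ∑ i ∈ Finset.range N,
      f (a + (i : ℝ) * (b - a) / (N : ℝ)) *
        (g (a + ((i : ℝ) + 1) * (b - a) / (N : ℝ)) - g (a + (i : ℝ) * (b - a) / (N : ℝ)))

/-- Auxiliary: signature coefficient for the *reversed* word. For a word
`jₘ :: (reversed (j₁,…,j_{m-1}))`, this is
`t ↦ ∫_a^t S(x)^{(j₁,…,j_{m-1})}_{[a,s]} d x^{(jₘ)}(s)`. -/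
noncomputable def sigAux {d : ℕ} (x : ℝ → Fin d → ℝ) (a : ℝ) : List (Fin d) → ℝ → ℝ
  | [], _ => 1
  | j :: J, t => rsIntegral (fun s => sigAux x a J s) (fun s => x s j) a t

/-- The signature coefficient `S(x)^J_{[a,t]}` of a path `x : ℝ → ℝ^d` at the
multi-index (word) `J = (j₁,…,jₘ)`, i.e. the iterated Riemann–Stieltjes integral
`∫_{a<t₁<⋯<tₘ<t} dx^{(j₁)}_{t₁} ⋯ dx^{(jₘ)}_{tₘ}`. -/
noncomputable def sigCoeff {d : ℕ} (x : ℝ → Fin d → ℝ) (a : ℝ) (J : List (Fin d)) (t : ℝ) : ℝ :=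
  sigAux x a J.reverse t

/-- View a vector of `ℝ^d` as a point of Euclidean space (ℓ² norm). -/
noncomputable def eucl {d : ℕ} (v : Fin d → ℝ) : EuclideanSpace ℝ (Fin d) :=
  (WithLp.equiv 2 (Fin d → ℝ)).symm v

/-- The total (1-)variation `‖x‖_{1,[a,b]}` of a path `x : ℝ → ℝ^d`, with respect
to the Euclidean norm. -/
noncomputable def totalVar {d : ℕ} (x : ℝ → Fin d → ℝ) (a b : ℝ) : ℝ :=
  (eVariationOn (fun t => eucl (x t)) (Set.Icc a b)).toReal

/-- The Hilbert–Schmidt norm of the level-`k` signature tensor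
`S(x)^{(k)}_{[a,b]} ∈ (ℝ^d)^{⊗k}`, computed in the orthonormal coordinate basis. -/
noncomputable def sigLevelNorm {d : ℕ} (x : ℝ → Fin d → ℝ) (a b : ℝ) (k : ℕ) : ℝ :=
  Real.sqrt (∑ w : Fin k → Fin d, (sigCoeff x a (List.ofFn w) b) ^ 2)

/-- Partial derivative in the `i`-th coordinate direction. -/
noncomputable def partialD {n : ℕ} (i : Fin n) (f : (Fin n → ℝ) → ℝ) : (Fin n → ℝ) → ℝ :=
  fun x => fderiv ℝ f x (Pi.single i 1)

/-- The mixed partial derivative `∂ⁿ/∂λ₁⋯∂λₙ`, one derivative in each coordinate. -/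
noncomputable def mixedDeriv {n : ℕ} (f : (Fin n → ℝ) → ℝ) : (Fin n → ℝ) → ℝ :=
  (List.finRange n).foldr (fun i g => partialD i g) f

namespace SigProof
open Topology


/-! ### Algebraic lemmas -/

lemma pow_step (m : ℕ) {c e : ℝ} (hc : 0 ≤ c) (hce : c ≤ e) :
    c ^ (m + 1) + ((m : ℝ) + 1) * c ^ m * (e - c) ≤ e ^ (m + 1) := by
  have key : (∑ i ∈ Finset.range (m + 1), e ^ i * c ^ (m - i)) * (e - c)
      = e ^ (m + 1) - c ^ (m + 1) := by
    simpa using geom_sum₂_mul e c (m + 1)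
  have hsum : ((m : ℝ) + 1) * c ^ m ≤ ∑ i ∈ Finset.range (m + 1), e ^ i * c ^ (m - i) := by
    have hterm : ∀ i ∈ Finset.range (m + 1), c ^ m ≤ e ^ i * c ^ (m - i) := by
      intro i hi
      simp only [Finset.mem_range] at hi
      have h1 : c ^ i ≤ e ^ i := pow_le_pow_left₀ hc hce i
      have h2 : (0:ℝ) ≤ c ^ (m - i) := pow_nonneg hc _
      calc c ^ m = c ^ i * c ^ (m - i) := by rw [← pow_add]; congr 1; omega
      _ ≤ e ^ i * c ^ (m - i) := mul_le_mul_of_nonneg_right h1 h2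
    calc ((m:ℝ)+1) * c ^ m = ∑ _i ∈ Finset.range (m+1), c ^ m := by
          rw [Finset.sum_const, Finset.card_range, nsmul_eq_mul]; push_cast; ring
      _ ≤ _ := Finset.sum_le_sum hterm
  have := mul_le_mul_of_nonneg_right hsum (sub_nonneg.mpr hce)
  nlinarith

lemma chain (m : ℕ) (c : ℕ → ℝ) (h0 : 0 ≤ c 0) (hmono : ∀ i, c i ≤ c (i + 1)) (N : ℕ) :
    ∑ i ∈ Finset.range N, c i ^ m * (c (i + 1) - c i)
      ≤ (c N ^ (m + 1) - c 0 ^ (m + 1)) / ((m : ℝ) + 1) := by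
  have hmono' : Monotone c := monotone_nat_of_le_succ hmono
  have hnn : ∀ i, 0 ≤ c i := fun i => h0.trans (hmono' (Nat.zero_le i))
  have hpos : (0:ℝ) < (m:ℝ) + 1 := by positivity
  induction N with
  | zero => simp
  | succ N ih =>
    rw [Finset.sum_range_succ]
    have hstep := pow_step m (hnn N) (hmono N)
    have h2 : c N ^ m * (c (N+1) - c N) ≤ (c (N+1) ^ (m+1) - c N ^ (m+1)) / ((m:ℝ)+1) := by
      rw [le_div_iff₀ hpos]; nlinarith
    calc ∑ i ∈ Finset.range N, c i ^ m * (c (i + 1) - c i) + c N ^ m * (c (N+1) - c N)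
        ≤ (c N ^ (m + 1) - c 0 ^ (m + 1)) / ((m : ℝ) + 1)
          + (c (N+1) ^ (m+1) - c N ^ (m+1)) / ((m:ℝ)+1) := add_le_add ih h2
      _ = (c (N+1) ^ (m + 1) - c 0 ^ (m + 1)) / ((m : ℝ) + 1) := by
          rw [← add_div]; ring_nf

lemma sum_range_mul_eq {β : Type*} [AddCommMonoid β] (h : ℕ → β) (N M : ℕ) :
    ∑ j ∈ Finset.range (N * M), h j
      = ∑ i ∈ Finset.range N, ∑ r ∈ Finset.range M, h (i * M + r) := by
  induction N with
  | zero => simp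
  | succ N ih =>
    rw [Nat.succ_mul, Finset.sum_range_add, ih, Finset.sum_range_succ]

/-! ### The variation function -/

noncomputable def Vf {d : ℕ} (x : ℝ → Fin d → ℝ) (a b t : ℝ) : ℝ :=
  variationOnFromTo (fun u => eucl (x u)) (Set.Icc a b) a t

lemma Vf_self {d : ℕ} (x : ℝ → Fin d → ℝ) (a b : ℝ) : Vf x a b a = 0 :=
  variationOnFromTo.self _ _ _

lemma Vf_nonneg {d : ℕ} (x : ℝ → Fin d → ℝ) (a b : ℝ) {t : ℝ} (ht : a ≤ t) :
    0 ≤ Vf x a b t := variationOnFromTo.nonneg_of_le _ _ ht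

lemma Vf_mono {d : ℕ} {x : ℝ → Fin d → ℝ} {a b : ℝ} (hab : a ≤ b)
    (hbv : BoundedVariationOn (fun t => eucl (x t)) (Set.Icc a b)) :
    MonotoneOn (Vf x a b) (Set.Icc a b) :=
  variationOnFromTo.monotoneOn hbv.locallyBoundedVariationOn ⟨le_refl a, hab⟩

lemma Vf_osc {d : ℕ} {x : ℝ → Fin d → ℝ} {a b : ℝ} (hab : a ≤ b)
    (hbv : BoundedVariationOn (fun t => eucl (x t)) (Set.Icc a b))
    {s t : ℝ} (hs : s ∈ Set.Icc a b) (ht : t ∈ Set.Icc a b) (hst : s ≤ t) :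
    ‖eucl (x t) - eucl (x s)‖ ≤ Vf x a b t - Vf x a b s := by
  have lbv := hbv.locallyBoundedVariationOn
  have h1 : dist (eucl (x s)) (eucl (x t))
      ≤ variationOnFromTo (fun u => eucl (x u)) (Set.Icc a b) s t := by
    rw [variationOnFromTo.eq_of_le _ _ hst, dist_edist]
    apply ENNReal.toReal_mono (lbv s t hs ht)
    apply eVariationOn.edist_le
    exacts [⟨hs, le_rfl, hst⟩, ⟨ht, hst, le_rfl⟩]
  have h2 := variationOnFromTo.add lbv (⟨le_refl a, hab⟩ : a ∈ Set.Icc a b) hs ht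
  rw [dist_eq_norm'] at h1
  unfold Vf
  linarith

lemma Vf_eq_totalVar {d : ℕ} (x : ℝ → Fin d → ℝ) {a b : ℝ} (hab : a ≤ b) :
    Vf x a b b = totalVar x a b := by
  unfold Vf totalVar
  rw [variationOnFromTo.eq_of_le _ _ hab, Set.inter_self]



variable {d m : ℕ}

/-- elementary tensor `u ⊗ v` in coordinates -/
noncomputable def tens (u : EuclideanSpace ℝ (Fin m → Fin d)) (v : Fin d → ℝ) :
    EuclideanSpace ℝ (Fin (m + 1) → Fin d) :=
  (WithLp.equiv 2 _).symm fun w => (WithLp.equiv 2 _ u) (w ∘ Fin.castSucc) * v (w (Fin.last m))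

lemma tens_sub_left (u u' : EuclideanSpace ℝ (Fin m → Fin d)) (v : Fin d → ℝ) :
    tens (u - u') v = tens u v - tens u' v := by
  unfold tens
  rw [WithLp.equiv_symm_apply, ← WithLp.toLp_sub]
  congr 1
  funext w
  simp [sub_mul]

lemma tens_add_right (u : EuclideanSpace ℝ (Fin m → Fin d)) (v v' : Fin d → ℝ) :
    tens u (v + v') = tens u v + tens u v' := by
  unfold tens
  rw [WithLp.equiv_symm_apply, ← WithLp.toLp_add]
  congr 1
  funext w
  simp [mul_add]

lemma tens_zero_right (u : EuclideanSpace ℝ (Fin m → Fin d)) :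
    tens u (0 : Fin d → ℝ) = 0 := by
  unfold tens
  have h : (fun w : Fin (m+1) → Fin d =>
      (WithLp.equiv 2 _ u) (w ∘ Fin.castSucc) * (0 : Fin d → ℝ) (w (Fin.last m)))
      = (0 : (Fin (m+1) → Fin d) → ℝ) := by
    funext w; simp
  rw [h, WithLp.equiv_symm_apply, WithLp.toLp_zero]

lemma tens_sum_right {ι : Type*} (s : Finset ι) (u : EuclideanSpace ℝ (Fin m → Fin d))
    (v : ι → Fin d → ℝ) :
    tens u (∑ r ∈ s, v r) = ∑ r ∈ s, tens u (v r) := by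
  classical
  induction s using Finset.induction with
  | empty => simpa using tens_zero_right u
  | insert _ _ hni ih =>
    rw [Finset.sum_insert hni, Finset.sum_insert hni, tens_add_right, ih]

/-- the snoc equivalence -/
def snocE (d m : ℕ) : ((Fin m → Fin d) × Fin d) ≃ (Fin (m + 1) → Fin d) where
  toFun p := Fin.snoc p.1 p.2
  invFun w := (w ∘ Fin.castSucc, w (Fin.last m))
  left_inv p := by
    ext <;> simp [Fin.snoc_comp_castSucc, Fin.snoc_last]
  right_inv w := by
    funext i
    refine Fin.lastCases ?_ ?_ i <;> simp [Fin.snoc_last, Fin.snoc_castSucc]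

lemma norm_tens (u : EuclideanSpace ℝ (Fin m → Fin d)) (v : Fin d → ℝ) :
    ‖tens u v‖ = ‖u‖ * ‖eucl v‖ := by
  rw [EuclideanSpace.norm_eq, EuclideanSpace.norm_eq, EuclideanSpace.norm_eq,
    ← Real.sqrt_mul (by positivity)]
  congr 1
  calc ∑ w, ‖tens u v w‖ ^ 2
      = ∑ p : (Fin m → Fin d) × Fin d, ‖tens u v (snocE d m p)‖ ^ 2 :=
        (Equiv.sum_comp (snocE d m) _).symm
    _ = ∑ p : (Fin m → Fin d) × Fin d, ‖u p.1‖ ^ 2 * ‖eucl v p.2‖ ^ 2 := by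
        apply Fintype.sum_congr
        rintro ⟨p1, p2⟩
        simp only [tens, snocE, Equiv.coe_fn_mk, WithLp.equiv_symm_apply,
          WithLp.equiv_apply, PiLp.toLp_apply, WithLp.ofLp_toLp, Fin.snoc_comp_castSucc, Fin.snoc_last, eucl]
        rw [norm_mul, mul_pow]
    _ = (∑ i, ‖u i‖ ^ 2) * ∑ j, ‖eucl v j‖ ^ 2 := by
        rw [Finset.sum_mul_sum]
        exact Fintype.sum_prod_type _

lemma tens_cont : Continuous fun p : EuclideanSpace ℝ (Fin m → Fin d) × (Fin d → ℝ) =>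
    tens p.1 p.2 := by
  unfold tens
  apply (PiLp.continuous_toLp 2 _).comp
  apply continuous_pi
  intro w
  exact ((continuous_apply _).comp ((PiLp.continuous_ofLp 2 _).comp continuous_fst)).mul
    ((continuous_apply _).comp continuous_snd)



/-- Left endpoints of the uniform partition. -/
noncomputable def pt (a t : ℝ) (N i : ℕ) : ℝ := a + (i : ℝ) * (t - a) / (N : ℝ)

lemma pt_zero (a t : ℝ) (N : ℕ) : pt a t N 0 = a := by simp [pt]

lemma pt_last (a t : ℝ) {N : ℕ} (hN : N ≠ 0) : pt a t N N = t := by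
  have : (N:ℝ) ≠ 0 := Nat.cast_ne_zero.mpr hN
  unfold pt; rw [mul_comm, mul_div_assoc, div_self this, mul_one]; ring

lemma pt_cont (a : ℝ) (N i : ℕ) : Continuous fun t => pt a t N i := by
  unfold pt; fun_prop

lemma pt_mono {a t : ℝ} (hat : a ≤ t) (N : ℕ) {i j : ℕ} (hij : i ≤ j) :
    pt a t N i ≤ pt a t N j := by
  unfold pt
  rw [mul_div_assoc, mul_div_assoc]
  have h := mul_le_mul_of_nonneg_right (show (i:ℝ) ≤ j from Nat.cast_le.mpr hij)
    (div_nonneg (sub_nonneg.mpr hat) (Nat.cast_nonneg N))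
  linarith

lemma pt_mem {a b t : ℝ} (ht : t ∈ Set.Icc a b) {N i : ℕ} (hi : i ≤ N) :
    pt a t N i ∈ Set.Icc a b := by
  have hat : a ≤ t := ht.1
  have htb : t ≤ b := ht.2
  rcases Nat.eq_zero_or_pos N with rfl | hN
  · obtain rfl : i = 0 := Nat.le_zero.mp hi
    simp only [pt, Nat.cast_zero, zero_mul, zero_div, add_zero]
    exact ⟨le_refl a, hat.trans htb⟩
  have hN0 : (0:ℝ) < (N:ℝ) := by exact_mod_cast hN
  have hnn : (0:ℝ) ≤ (i:ℝ) * (t - a) / N :=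
    div_nonneg (mul_nonneg (Nat.cast_nonneg i) (sub_nonneg.mpr hat)) hN0.le
  refine ⟨by unfold pt; linarith, ?_⟩
  have hmul : (i:ℝ) * (t - a) ≤ (N:ℝ) * (t - a) :=
    mul_le_mul_of_nonneg_right (Nat.cast_le.mpr hi) (sub_nonneg.mpr hat)
  have h1 : (i:ℝ) * (t - a) / N ≤ (N:ℝ) * (t - a) / N :=
    div_le_div_of_nonneg_right hmul hN0.le
  have h2 : (N:ℝ) * ((t - a) / N) = t - a := by field_simp
  rw [mul_div_assoc ((N:ℝ)), h2] at h1
  unfold pt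
  linarith

lemma pt_mem' {a b t : ℝ} (ht : t ∈ Set.Icc a b) {N i : ℕ} (hi : i ≤ N) :
    pt a t N i ∈ Set.Icc a t := by
  have h := pt_mem (Set.mem_Icc.mpr ⟨ht.1, le_refl t⟩) hi
  exact h

lemma pt_mul (a t : ℝ) {N M : ℕ} (hN : N ≠ 0) (hM : M ≠ 0) (i : ℕ) :
    pt a t (N * M) (i * M) = pt a t N i := by
  have hN0 : (N:ℝ) ≠ 0 := Nat.cast_ne_zero.mpr hN
  have hM0 : (M:ℝ) ≠ 0 := Nat.cast_ne_zero.mpr hM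
  unfold pt
  push_cast
  field_simp

lemma pt_dist {a t : ℝ} (hat : a ≤ t) {N M r : ℕ} (hN : N ≠ 0) (hM : M ≠ 0)
    (hr : r ≤ M) (i : ℕ) :
    dist (pt a t N i) (pt a t (N * M) (i * M + r)) ≤ (t - a) / N := by
  have hN0 : (0:ℝ) < (N:ℝ) := by exact_mod_cast Nat.pos_of_ne_zero hN
  have hM0 : (0:ℝ) < (M:ℝ) := by exact_mod_cast Nat.pos_of_ne_zero hM
  have heq : pt a t (N * M) (i * M + r) - pt a t N i = (r:ℝ) * (t - a) / ((N:ℝ) * M) := by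
    unfold pt
    push_cast
    field_simp
    ring
  rw [dist_comm, Real.dist_eq, heq, abs_of_nonneg
    (div_nonneg (mul_nonneg (Nat.cast_nonneg r) (sub_nonneg.mpr hat)) (by positivity))]
  rw [div_le_div_iff₀ (by positivity) hN0]
  have h1 : (r:ℝ) * (t - a) ≤ (M:ℝ) * (t - a) :=
    mul_le_mul_of_nonneg_right (by exact_mod_cast hr) (sub_nonneg.mpr hat)
  nlinarith


/-- The vector-valued left Riemann–Stieltjes sum for `∫ Φ ⊗ dx` over the uniform
`N`-partition of `[a,t]`. -/
noncomputable def RS {d m : ℕ} (x : ℝ → Fin d → ℝ)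
    (Φ : ℝ → EuclideanSpace ℝ (Fin m → Fin d)) (a t : ℝ) (N : ℕ) :
    EuclideanSpace ℝ (Fin (m + 1) → Fin d) :=
  ∑ i ∈ Finset.range N, tens (Φ (pt a t N i)) (x (pt a t N (i + 1)) - x (pt a t N i))

lemma equiv_sum_apply {κ : Type*} [Fintype κ] {ι : Type*} (s : Finset ι)
    (f : ι → EuclideanSpace ℝ κ) (k : κ) :
    (WithLp.equiv 2 (κ → ℝ)) (∑ j ∈ s, f j) k = ∑ j ∈ s, (WithLp.equiv 2 (κ → ℝ)) (f j) k := by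
  classical
  induction s using Finset.induction with
  | empty => simp
  | insert _ _ hni ih =>
    rw [Finset.sum_insert hni, Finset.sum_insert hni, ← ih]; rfl

lemma RS_apply {d m : ℕ} (x : ℝ → Fin d → ℝ) (Φ : ℝ → EuclideanSpace ℝ (Fin m → Fin d))
    (a t : ℝ) (N : ℕ) (w : Fin (m + 1) → Fin d) :
    (WithLp.equiv 2 _) (RS x Φ a t N) w
      = ∑ i ∈ Finset.range N, (WithLp.equiv 2 _ (Φ (pt a t N i))) (w ∘ Fin.castSucc)
          * (x (pt a t N (i + 1)) (w (Fin.last m)) - x (pt a t N i) (w (Fin.last m))) := by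
  rw [RS, equiv_sum_apply]
  apply Finset.sum_congr rfl
  intro i _
  simp only [tens, Equiv.apply_symm_apply, Pi.sub_apply]

theorem step {d : ℕ} {a b : ℝ} (hab : a ≤ b) {x : ℝ → Fin d → ℝ}
    (hc : ContinuousOn x (Set.Icc a b))
    (hbv : BoundedVariationOn (fun t => eucl (x t)) (Set.Icc a b))
    {m : ℕ} (Φ : ℝ → EuclideanSpace ℝ (Fin m → Fin d))
    (hFc : ContinuousOn Φ (Set.Icc a b))
    (hFb : ∀ t ∈ Set.Icc a b, ‖Φ t‖ ≤ Vf x a b t ^ m / (Nat.factorial m : ℝ))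
    (L : ℝ → EuclideanSpace ℝ (Fin (m + 1) → Fin d))
    (hL : ∀ t, L t = (WithLp.equiv 2 _).symm fun w =>
        rsIntegral (fun s => (WithLp.equiv 2 _ (Φ s)) (w ∘ Fin.castSucc))
          (fun s => x s (w (Fin.last m))) a t) :
    ContinuousOn L (Set.Icc a b) ∧
      ∀ t ∈ Set.Icc a b, ‖L t‖ ≤ Vf x a b t ^ (m + 1) / (Nat.factorial (m + 1) : ℝ) := by
  have hVmono := Vf_mono hab hbv
  set TV := Vf x a b b with hTVdef
  have hTV0 : 0 ≤ TV := Vf_nonneg x a b hab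
  have hVle : ∀ t ∈ Set.Icc a b, Vf x a b t ≤ TV := fun t ht =>
    hVmono ht ⟨hab, le_refl b⟩ ht.2
  -- ### Key refinement estimate
  have key : ∀ ε : ℝ, 0 < ε → ∃ N₀ : ℕ, 1 ≤ N₀ ∧ ∀ N, N₀ ≤ N → ∀ M, 1 ≤ M →
      ∀ t ∈ Set.Icc a b, ‖RS x Φ a t N - RS x Φ a t (N * M)‖ ≤ ε := by
    intro ε hε
    set ε' := ε / (TV + 1) with hε'def
    have hε' : 0 < ε' := by positivity
    have hUC := isCompact_Icc.uniformContinuousOn_of_continuous hFc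
    rw [Metric.uniformContinuousOn_iff] at hUC
    obtain ⟨δ, hδ, hδF⟩ := hUC ε' hε'
    obtain ⟨N₁, hN₁⟩ := exists_nat_gt ((b - a) / δ)
    refine ⟨N₁ + 1, Nat.le_add_left 1 N₁, ?_⟩
    intro N hN M hM t ht
    have hat : a ≤ t := ht.1
    have hNne : N ≠ 0 := by omega
    have hMne : M ≠ 0 := by omega
    have hNMne : N * M ≠ 0 := Nat.mul_ne_zero hNne hMne
    have hNpos : (0:ℝ) < (N:ℝ) := by exact_mod_cast Nat.pos_of_ne_zero hNne
    have hmesh : (b - a) / N < δ := by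
      rw [div_lt_iff₀ hNpos]
      have hcast : (N₁:ℝ) + 1 ≤ (N:ℝ) := by exact_mod_cast hN
      have h2 : (b - a) / δ < (N:ℝ) := by linarith
      rw [div_lt_iff₀ hδ] at h2
      linarith
    -- rewrite both sums over the fine partition
    have step1 : RS x Φ a t N = ∑ i ∈ Finset.range N, ∑ r ∈ Finset.range M,
        tens (Φ (pt a t N i))
          (x (pt a t (N * M) (i * M + r + 1)) - x (pt a t (N * M) (i * M + r))) := by
      apply Finset.sum_congr rfl
      intro i _
      have p1 : pt a t (N * M) (i * M + M) = pt a t N (i + 1) := by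
        rw [show i * M + M = (i + 1) * M from (Nat.succ_mul i M).symm, pt_mul a t hNne hMne]
      have p2 : pt a t (N * M) (i * M) = pt a t N i := pt_mul a t hNne hMne i
      have e2 := Finset.sum_range_sub (fun r => x (pt a t (N * M) (i * M + r))) M
      simp only [Nat.add_zero] at e2
      rw [show (∑ r ∈ Finset.range M,
            (x (pt a t (N * M) (i * M + (r + 1))) - x (pt a t (N * M) (i * M + r))))
          = ∑ r ∈ Finset.range M,
            (x (pt a t (N * M) (i * M + r + 1)) - x (pt a t (N * M) (i * M + r))) from
        Finset.sum_congr rfl fun r _ => by rw [Nat.add_assoc]] at e2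
      have e1 : x (pt a t N (i + 1)) - x (pt a t N i)
          = x (pt a t (N * M) (i * M + M)) - x (pt a t (N * M) (i * M)) := by
        rw [p1, p2]
      rw [e1, ← e2, tens_sum_right]
    have step2 : RS x Φ a t (N * M) = ∑ i ∈ Finset.range N, ∑ r ∈ Finset.range M,
        tens (Φ (pt a t (N * M) (i * M + r)))
          (x (pt a t (N * M) (i * M + r + 1)) - x (pt a t (N * M) (i * M + r))) := by
      rw [RS, sum_range_mul_eq]
    have hdiff : RS x Φ a t N - RS x Φ a t (N * M)
        = ∑ i ∈ Finset.range N, ∑ r ∈ Finset.range M,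
            tens (Φ (pt a t N i) - Φ (pt a t (N * M) (i * M + r)))
              (x (pt a t (N * M) (i * M + r + 1)) - x (pt a t (N * M) (i * M + r))) := by
      rw [step1, step2, ← Finset.sum_sub_distrib]
      apply Finset.sum_congr rfl
      intro i _
      rw [← Finset.sum_sub_distrib]
      apply Finset.sum_congr rfl
      intro r _
      rw [tens_sub_left]
    -- bound each term
    have hterm : ∀ i ∈ Finset.range N, ∀ r ∈ Finset.range M,
        ‖tens (Φ (pt a t N i) - Φ (pt a t (N * M) (i * M + r)))
            (x (pt a t (N * M) (i * M + r + 1)) - x (pt a t (N * M) (i * M + r)))‖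
          ≤ ε' * (Vf x a b (pt a t (N * M) (i * M + r + 1))
                  - Vf x a b (pt a t (N * M) (i * M + r))) := by
      intro i hi r hr
      rw [Finset.mem_range] at hi hr
      have hjle : i * M + r + 1 ≤ N * M := by
        have h1 : i * M + M ≤ N * M := by
          have h := Nat.mul_le_mul_right M (show i + 1 ≤ N from hi)
          rwa [Nat.succ_mul] at h
        have h2 : i * M + r + 1 ≤ i * M + M := by
          rw [Nat.add_assoc]
          exact Nat.add_le_add_left hr _
        exact le_trans h2 h1
      have hjle' : i * M + r ≤ N * M := by omega
      have hq1 := pt_mem ht hjle'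
      have hq2 := pt_mem ht hjle
      have hp := pt_mem ht hi.le
      rw [norm_tens]
      have hFdiff : ‖Φ (pt a t N i) - Φ (pt a t (N * M) (i * M + r))‖ ≤ ε' := by
        rw [← dist_eq_norm]
        apply le_of_lt
        apply hδF _ hp _ hq1
        calc dist (pt a t N i) (pt a t (N * M) (i * M + r)) ≤ (t - a) / N :=
              pt_dist hat hNne hMne hr.le i
          _ ≤ (b - a) / N := div_le_div_of_nonneg_right (by linarith [ht.2] : t - a ≤ b - a) hNpos.le
          _ < δ := hmesh
      have hxdiff : ‖eucl (x (pt a t (N * M) (i * M + r + 1)) - x (pt a t (N * M) (i * M + r)))‖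
          ≤ Vf x a b (pt a t (N * M) (i * M + r + 1)) - Vf x a b (pt a t (N * M) (i * M + r)) := by
        have heq : eucl (x (pt a t (N * M) (i * M + r + 1)) - x (pt a t (N * M) (i * M + r)))
            = eucl (x (pt a t (N * M) (i * M + r + 1))) - eucl (x (pt a t (N * M) (i * M + r))) := by
          unfold eucl; rw [WithLp.equiv_symm_apply, WithLp.toLp_sub]
        rw [heq]
        exact Vf_osc hab hbv hq1 hq2 (pt_mono hat (N * M) (Nat.le_succ _))
      exact mul_le_mul hFdiff hxdiff (norm_nonneg _) hε'.le
    -- sum it up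
    rw [hdiff]
    calc ‖∑ i ∈ Finset.range N, ∑ r ∈ Finset.range M,
            tens (Φ (pt a t N i) - Φ (pt a t (N * M) (i * M + r)))
              (x (pt a t (N * M) (i * M + r + 1)) - x (pt a t (N * M) (i * M + r)))‖
        ≤ ∑ i ∈ Finset.range N, ∑ r ∈ Finset.range M,
            ‖tens (Φ (pt a t N i) - Φ (pt a t (N * M) (i * M + r)))
              (x (pt a t (N * M) (i * M + r + 1)) - x (pt a t (N * M) (i * M + r)))‖ :=
          le_trans (norm_sum_le _ _) (Finset.sum_le_sum fun i _ => norm_sum_le _ _)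
      _ ≤ ∑ i ∈ Finset.range N, ∑ r ∈ Finset.range M,
            ε' * (Vf x a b (pt a t (N * M) (i * M + r + 1))
                  - Vf x a b (pt a t (N * M) (i * M + r))) :=
          Finset.sum_le_sum fun i hi => Finset.sum_le_sum fun r hr => hterm i hi r hr
      _ = ε' * ∑ j ∈ Finset.range (N * M),
            (Vf x a b (pt a t (N * M) (j + 1)) - Vf x a b (pt a t (N * M) j)) := by
          rw [Finset.mul_sum, sum_range_mul_eq
            (fun j => ε' * (Vf x a b (pt a t (N * M) (j + 1)) - Vf x a b (pt a t (N * M) j))) N M]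
      _ = ε' * (Vf x a b t - Vf x a b a) := by
          rw [Finset.sum_range_sub (fun j => Vf x a b (pt a t (N * M) j)) (N * M),
            pt_last a t hNMne, pt_zero]
      _ ≤ ε' * (TV + 1) := by
          have h1 : Vf x a b t - Vf x a b a ≤ TV + 1 := by
            rw [Vf_self]
            have := hVle t ht
            linarith
          exact mul_le_mul_of_nonneg_left h1 hε'.le
      _ = ε := by
          rw [hε'def, div_mul_cancel₀]
          positivity
  -- ### Cauchy property and convergence
  have cauchy : ∀ t ∈ Set.Icc a b, CauchySeq (fun N => RS x Φ a t N) := by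
    intro t ht
    rw [Metric.cauchySeq_iff]
    intro ε hε
    obtain ⟨N₀, hN₀1, hkey⟩ := key (ε / 3) (by positivity)
    refine ⟨N₀, fun p hp q hq => ?_⟩
    have hp1 : 1 ≤ p := le_trans hN₀1 hp
    have hq1 : 1 ≤ q := le_trans hN₀1 hq
    have h1 := hkey p hp q hq1 t ht
    have h2 := hkey q hq p hp1 t ht
    rw [Nat.mul_comm] at h2
    calc dist (RS x Φ a t p) (RS x Φ a t q)
        ≤ dist (RS x Φ a t p) (RS x Φ a t (p * q))
          + dist (RS x Φ a t (p * q)) (RS x Φ a t q) := dist_triangle _ _ _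
      _ ≤ ε / 3 + ε / 3 := add_le_add (by rw [dist_eq_norm]; exact h1)
          (by rw [dist_comm, dist_eq_norm]; exact h2)
      _ < ε := by linarith
  have conv : ∀ t ∈ Set.Icc a b, Filter.Tendsto (fun N => RS x Φ a t N) atTop (𝓝 (L t)) := by
    intro t ht
    obtain ⟨Lim, hLim⟩ := cauchySeq_tendsto_of_complete (cauchy t ht)
    have hLt : L t = Lim := by
      rw [hL]
      have hw : ∀ w : Fin (m + 1) → Fin d,
          rsIntegral (fun s => (WithLp.equiv 2 _ (Φ s)) (w ∘ Fin.castSucc))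
            (fun s => x s (w (Fin.last m))) a t = (WithLp.equiv 2 _ Lim) w := by
        intro w
        have h1 : Filter.Tendsto (fun N => (WithLp.equiv 2 _) (RS x Φ a t N) w) atTop
            (𝓝 ((WithLp.equiv 2 _ Lim) w)) :=
          (((continuous_apply w).comp (PiLp.continuous_ofLp 2 _)).tendsto _).comp hLim
        apply Filter.Tendsto.limUnder_eq
        convert h1 using 1
        funext N
        rw [RS_apply]
        apply Finset.sum_congr rfl
        intro i _
        have hpt1 : pt a t N i = a + (i:ℝ) * (t - a) / N := rfl
        have hpt2 : pt a t N (i + 1) = a + ((i:ℝ) + 1) * (t - a) / N := by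
          unfold pt; push_cast; ring
        rw [hpt1, hpt2]
      conv_rhs => rw [← (WithLp.equiv 2 _).symm_apply_apply Lim]
      congr 1
      funext w
      exact hw w
    rw [hLt]
    exact hLim
  -- ### uniform convergence
  have unif : TendstoUniformlyOn (fun N t => RS x Φ a t N) L atTop (Set.Icc a b) := by
    rw [Metric.tendstoUniformlyOn_iff]
    intro ε hε
    obtain ⟨N₀, hN₀1, hkey⟩ := key (ε / 2) (by positivity)
    filter_upwards [eventually_ge_atTop N₀] with N hN
    intro t ht
    have hN1 : 1 ≤ N := le_trans hN₀1 hN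
    have hmul : Filter.Tendsto (fun M : ℕ => N * M) atTop atTop :=
      tendsto_atTop_mono (fun M => Nat.le_mul_of_pos_left M (by omega)) tendsto_id
    have hM : Filter.Tendsto (fun M => RS x Φ a t (N * M)) atTop (𝓝 (L t)) :=
      (conv t ht).comp hmul
    have hnorm : Filter.Tendsto (fun M => ‖RS x Φ a t N - RS x Φ a t (N * M)‖) atTop
        (𝓝 ‖RS x Φ a t N - L t‖) := (Filter.Tendsto.const_sub _ hM).norm
    have hle : ‖RS x Φ a t N - L t‖ ≤ ε / 2 := by
      apply le_of_tendsto hnorm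
      filter_upwards [eventually_ge_atTop 1] with M hM1
      exact hkey N hN M hM1 t ht
    rw [dist_comm, dist_eq_norm]
    linarith
  -- ### continuity of the Riemann sums
  have contRS : ∀ N : ℕ, ContinuousOn (fun t => RS x Φ a t N) (Set.Icc a b) := by
    intro N
    apply continuousOn_finset_sum
    intro i hi
    rw [Finset.mem_range] at hi
    have h1 : ContinuousOn (fun t => Φ (pt a t N i)) (Set.Icc a b) :=
      hFc.comp (pt_cont a N i).continuousOn (fun t ht => pt_mem ht hi.le)
    have h2 : ContinuousOn (fun t => x (pt a t N (i + 1)) - x (pt a t N i)) (Set.Icc a b) :=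
      (hc.comp (pt_cont a N (i + 1)).continuousOn (fun t ht => pt_mem ht hi)).sub
        (hc.comp (pt_cont a N i).continuousOn (fun t ht => pt_mem ht hi.le))
    exact tens_cont.comp_continuousOn (h1.prodMk h2)
  -- ### per-sum norm bound
  have sumBound : ∀ t ∈ Set.Icc a b, ∀ N : ℕ, 1 ≤ N →
      ‖RS x Φ a t N‖ ≤ Vf x a b t ^ (m + 1) / (Nat.factorial (m + 1) : ℝ) := by
    intro t ht N hN
    have hNne : N ≠ 0 := by omega
    have hat : a ≤ t := ht.1
    set c : ℕ → ℝ := fun i => Vf x a b (pt a t N (min i N)) with hc_def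
    have hcnn : ∀ i, 0 ≤ c i := fun i =>
      Vf_nonneg x a b (pt_mem ht (min_le_right i N)).1
    have hcmono : ∀ i, c i ≤ c (i + 1) := by
      intro i
      apply hVmono (pt_mem ht (min_le_right i N)) (pt_mem ht (min_le_right (i + 1) N))
      exact pt_mono hat N (by omega : min i N ≤ min (i + 1) N)
    have hc0 : c 0 = 0 := by
      have h : min 0 N = 0 := Nat.zero_min N
      simp only [hc_def, h, pt_zero, Vf_self]
    have hcN : c N = Vf x a b t := by
      simp only [hc_def, min_self]
      rw [pt_last a t hNne]
    have hfacpos : (0:ℝ) < (Nat.factorial m : ℝ) := by positivity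
    calc ‖RS x Φ a t N‖
        ≤ ∑ i ∈ Finset.range N,
            ‖tens (Φ (pt a t N i)) (x (pt a t N (i + 1)) - x (pt a t N i))‖ :=
          norm_sum_le _ _
      _ ≤ ∑ i ∈ Finset.range N, (c i ^ m / (Nat.factorial m : ℝ)) * (c (i + 1) - c i) := by
          apply Finset.sum_le_sum
          intro i hi
          rw [Finset.mem_range] at hi
          have hiN : i ≤ N := hi.le
          have hi1N : i + 1 ≤ N := hi
          have hmin1 : min i N = i := min_eq_left hiN
          have hmin2 : min (i + 1) N = i + 1 := min_eq_left hi1N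
          rw [norm_tens]
          have h1 : ‖Φ (pt a t N i)‖ ≤ c i ^ m / (Nat.factorial m : ℝ) := by
            simp only [hc_def, hmin1]
            exact hFb _ (pt_mem ht hiN)
          have h2 : ‖eucl (x (pt a t N (i + 1)) - x (pt a t N i))‖ ≤ c (i + 1) - c i := by
            have heq : eucl (x (pt a t N (i + 1)) - x (pt a t N i))
                = eucl (x (pt a t N (i + 1))) - eucl (x (pt a t N i)) := by
              unfold eucl; rw [WithLp.equiv_symm_apply, WithLp.toLp_sub]
            rw [heq]
            simp only [hc_def, hmin1, hmin2]
            exact Vf_osc hab hbv (pt_mem ht hiN) (pt_mem ht hi1N) (pt_mono hat N (Nat.le_succ i))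
          exact mul_le_mul h1 h2 (norm_nonneg _)
            (div_nonneg (pow_nonneg (hcnn i) m) hfacpos.le)
      _ = (1 / (Nat.factorial m : ℝ)) * ∑ i ∈ Finset.range N, c i ^ m * (c (i + 1) - c i) := by
          rw [Finset.mul_sum]
          apply Finset.sum_congr rfl
          intros
          ring
      _ ≤ (1 / (Nat.factorial m : ℝ)) * ((c N ^ (m + 1) - c 0 ^ (m + 1)) / ((m:ℝ) + 1)) :=
          mul_le_mul_of_nonneg_left (chain m c (le_of_eq hc0.symm) hcmono N) (by positivity)
      _ = Vf x a b t ^ (m + 1) / (Nat.factorial (m + 1) : ℝ) := by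
          rw [hcN, hc0, zero_pow (by omega : m + 1 ≠ 0), sub_zero, Nat.factorial_succ,
            div_mul_div_comm, one_mul]
          congr 1
          push_cast
          ring
  refine ⟨unif.continuousOn (Filter.Eventually.of_forall contRS).frequently, ?_⟩
  intro t ht
  apply le_of_tendsto (conv t ht).norm
  filter_upwards [eventually_ge_atTop 1] with N hN
  exact sumBound t ht N hN

/-- The level-`m` signature tensor as an element of Euclidean space. -/
noncomputable def Tv {d : ℕ} (x : ℝ → Fin d → ℝ) (a : ℝ) (m : ℕ) (t : ℝ) :
    EuclideanSpace ℝ (Fin m → Fin d) :=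
  (WithLp.equiv 2 _).symm fun w => sigCoeff x a (List.ofFn w) t

theorem Tv_props {d : ℕ} {a b : ℝ} (hab : a ≤ b) {x : ℝ → Fin d → ℝ}
    (hc : ContinuousOn x (Set.Icc a b))
    (hbv : BoundedVariationOn (fun t => eucl (x t)) (Set.Icc a b)) :
    ∀ m : ℕ, ContinuousOn (Tv x a m) (Set.Icc a b) ∧
      ∀ t ∈ Set.Icc a b, ‖Tv x a m t‖ ≤ Vf x a b t ^ m / (Nat.factorial m : ℝ) := by
  intro m
  induction m with
  | zero =>
    have hval : ∀ (t : ℝ) (w : Fin 0 → Fin d), sigCoeff x a (List.ofFn w) t = 1 := by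
      intro t w
      rw [List.ofFn_zero]
      simp [sigCoeff, sigAux]
    constructor
    · have hconst : Tv x a 0 = fun _ => (WithLp.equiv 2 ((Fin 0 → Fin d) → ℝ)).symm fun _ => 1 := by
        funext t
        unfold Tv
        rw [show (fun w : Fin 0 → Fin d => sigCoeff x a (List.ofFn w) t) = fun _ => (1:ℝ) from
          funext fun w => hval t w]
      rw [hconst]
      exact continuousOn_const
    · intro t ht
      have hnorm : ‖Tv x a 0 t‖ = 1 := by
        unfold Tv
        rw [EuclideanSpace.norm_eq]
        have : ∀ w : Fin 0 → Fin d,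
            ‖(WithLp.equiv 2 ((Fin 0 → Fin d) → ℝ)).symm (fun w' => sigCoeff x a (List.ofFn w') t) w‖ ^ 2 = 1 := by
          intro w
          rw [WithLp.equiv_symm_apply, PiLp.toLp_apply, hval t w]
          norm_num
        rw [Finset.sum_congr rfl fun w _ => this w]
        simp
      rw [hnorm, pow_zero, Nat.factorial_zero]
      norm_num
  | succ m ih =>
    obtain ⟨ihc, ihb⟩ := ih
    refine step hab hc hbv (Tv x a m) ihc ihb (Tv x a (m + 1)) ?_
    intro t
    unfold Tv
    congr 1
    funext w
    show sigAux x a (List.ofFn w).reverse t = _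
    rw [List.ofFn_succ', List.concat_eq_append, List.reverse_append, List.reverse_singleton,
      List.singleton_append]
    rfl

end SigProof

/-- Factorial decay: for a continuous bounded-variation path
`x : [a,b] → ℝ^d`, each signature level satisfies
`‖S(x)^{(k)}‖ ≤ ‖x‖₁ᵏ / k!`. -/
theorem sig_factorial_decay {d : ℕ} (a b : ℝ) (hab : a ≤ b)
    (x : ℝ → Fin d → ℝ)
    (hc : ContinuousOn x (Set.Icc a b))
    (hbv : BoundedVariationOn (fun t => eucl (x t)) (Set.Icc a b))
    (k : ℕ) (hk : 1 ≤ k) :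
    sigLevelNorm x a b k ≤ totalVar x a b ^ k / (Nat.factorial k : ℝ) := by
  have h := (SigProof.Tv_props hab hc hbv k).2 b ⟨hab, le_refl b⟩
  have hnorm : sigLevelNorm x a b k = ‖SigProof.Tv x a k b‖ := by
    unfold sigLevelNorm
    rw [EuclideanSpace.norm_eq]
    congr 1
    apply Finset.sum_congr rfl
    intro w _
    simp [SigProof.Tv, PiLp.toLp_apply, Real.norm_eq_abs, sq_abs]
  rw [hnorm, ← SigProof.Vf_eq_totalVar x hab]
  exact h
end

section
/- Let $z : [0,1] \to \mathbb{R}^n$ be the axis path $z = e_1 * e_2 * \cdots * e_n$, the concatenation of unit increments in directions $e_1,\ldots,e_n$. Then for every multi-index $J \in \mathcal{P}(1,\ldots,n)$ (a permutation of $(1,\ldots,n)$), the signature coefficient satisfies $S(z)^J = 1$ if $J = (1,2,\ldots,n)$ and $S(z)^J = 0$ otherwise. -/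
open Filter

/-- The axis path `z = e₁ * e₂ * ⋯ * eₙ` on `[0,1]`: component `i` increases
linearly from `0` to `1` on the sub-interval `[i/n, (i+1)/n]`. -/
noncomputable def axisPath (n : ℕ) : ℝ → Fin n → ℝ :=
  fun t i => max 0 (min 1 ((n : ℝ) * t - (i : ℕ)))

noncomputable def clampF (n : ℕ) (j : ℝ) (t : ℝ) : ℝ := max 0 (min 1 ((n : ℝ) * t - j))

lemma clampF_of_le {n : ℕ} {j s : ℝ} (h : (n:ℝ) * s ≤ j) : clampF n j s = 0 := by
  unfold clampF
  rw [max_eq_left]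
  exact min_le_of_right_le (by linarith)

lemma clampF_of_ge {n : ℕ} {j s : ℝ} (h : j + 1 ≤ (n:ℝ) * s) : clampF n j s = 1 := by
  unfold clampF
  rw [min_eq_left (by linarith), max_eq_right (by linarith)]

lemma clamp1_lip (x y : ℝ) : |max 0 (min 1 x) - max 0 (min 1 y)| ≤ |x - y| := by
  have h1 := le_abs_self (x - y)
  have h2 := neg_abs_le (x - y)
  rw [abs_sub_le_iff]
  constructor <;> (simp only [max_def, min_def]; split_ifs <;> linarith)

lemma clampF_lip {n : ℕ} (j : ℝ) (s u : ℝ) :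
    |clampF n j s - clampF n j u| ≤ (n:ℝ) * |s - u| := by
  have h := clamp1_lip ((n:ℝ) * s - j) ((n:ℝ) * u - j)
  have he : ((n:ℝ) * s - j) - ((n:ℝ) * u - j) = (n:ℝ) * (s - u) := by ring
  rw [he, abs_mul, Nat.abs_cast] at h
  exact h

lemma clampF_near_one {n : ℕ} (j s : ℝ) :
    |clampF n (j - 1) s - 1| ≤ max 0 (j - (n:ℝ) * s) := by
  rw [abs_le]
  constructor <;> (simp only [clampF, max_def, min_def]; split_ifs <;> linarith)

lemma rs_eq_zero (f g : ℝ → ℝ) (t : ℝ) (ht : 0 ≤ t)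
    (h : ∀ u v : ℝ, 0 ≤ u → u ≤ v → v ≤ t → f u * (g v - g u) = 0) :
    rsIntegral f g 0 t = 0 := by
  unfold rsIntegral
  have hz : (fun N : ℕ => ∑ i ∈ Finset.range N,
      f (0 + (i : ℝ) * (t - 0) / (N : ℝ)) *
        (g (0 + ((i : ℝ) + 1) * (t - 0) / (N : ℝ)) - g (0 + (i : ℝ) * (t - 0) / (N : ℝ))))
      = fun _ => (0 : ℝ) := by
    funext N
    apply Finset.sum_eq_zero
    intro i hi
    have hiN : i < N := Finset.mem_range.1 hi
    have hN0 : (0:ℝ) < N := by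
      have : 0 < N := Nat.lt_of_le_of_lt (Nat.zero_le i) hiN
      exact_mod_cast this
    apply h
    · rw [zero_add, sub_zero]
      positivity
    · simp only [zero_add, sub_zero]
      gcongr
      linarith
    · rw [zero_add, sub_zero, div_le_iff₀ hN0]
      have : ((i:ℝ) + 1) ≤ N := by exact_mod_cast hiN
      nlinarith
  rw [hz]
  exact tendsto_const_nhds.limUnder_eq

lemma rs_step (n : ℕ) (j : ℝ) (hj : 0 ≤ j) (f : ℝ → ℝ) (t : ℝ) (ht0 : 0 ≤ t)
    (Hf : ∀ s, 0 ≤ s → s ≤ t → |f s - 1| ≤ max 0 (j - (n:ℝ) * s)) :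
    rsIntegral f (clampF n j) 0 t = clampF n j t := by
  have g0 : clampF n j 0 = 0 := clampF_of_le (by simpa using hj)
  have key : ∀ N : ℕ, 1 ≤ N →
      |(∑ i ∈ Finset.range N, f ((i:ℝ) * t / N) *
          (clampF n j (((i:ℝ)+1) * t / N) - clampF n j ((i:ℝ) * t / N)))
        - clampF n j t| ≤ (n:ℝ)^2 * t^2 / N := by
    intro N hN
    have hN0 : (0:ℝ) < N := by exact_mod_cast hN
    have hNt : ((N:ℝ) * t) / N = t := by field_simp
    have tel : ∑ i ∈ Finset.range N,
        (clampF n j (((i:ℝ)+1) * t / N) - clampF n j ((i:ℝ) * t / N)) = clampF n j t := by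
      have h := Finset.sum_range_sub (fun i : ℕ => clampF n j ((i:ℝ) * t / N)) N
      calc ∑ i ∈ Finset.range N,
            (clampF n j (((i:ℝ)+1) * t / N) - clampF n j ((i:ℝ) * t / N))
          = ∑ i ∈ Finset.range N,
            (clampF n j (((i+1 : ℕ):ℝ) * t / N) - clampF n j ((i:ℝ) * t / N)) := by
            apply Finset.sum_congr rfl; intro i _; push_cast; ring_nf
        _ = clampF n j ((N:ℝ) * t / N) - clampF n j (((0:ℕ):ℝ) * t / N) := h
        _ = clampF n j t := by rw [hNt]; simp [g0]
    have split : (∑ i ∈ Finset.range N, f ((i:ℝ) * t / N) *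
          (clampF n j (((i:ℝ)+1) * t / N) - clampF n j ((i:ℝ) * t / N))) - clampF n j t
        = ∑ i ∈ Finset.range N, (f ((i:ℝ) * t / N) - 1) *
          (clampF n j (((i:ℝ)+1) * t / N) - clampF n j ((i:ℝ) * t / N)) := by
      rw [← tel, ← Finset.sum_sub_distrib]
      apply Finset.sum_congr rfl; intro i _; ring
    rw [split]
    calc |∑ i ∈ Finset.range N, (f ((i:ℝ) * t / N) - 1) *
          (clampF n j (((i:ℝ)+1) * t / N) - clampF n j ((i:ℝ) * t / N))|
        ≤ ∑ i ∈ Finset.range N, |(f ((i:ℝ) * t / N) - 1) *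
          (clampF n j (((i:ℝ)+1) * t / N) - clampF n j ((i:ℝ) * t / N))| :=
          Finset.abs_sum_le_sum_abs _ _
      _ ≤ ∑ _i ∈ Finset.range N, (n:ℝ)^2 * t^2 / N^2 := by
          apply Finset.sum_le_sum
          intro i hi
          have hiN : ((i:ℝ) + 1) ≤ N := by exact_mod_cast Finset.mem_range.1 hi
          have hu0 : 0 ≤ (i:ℝ) * t / N := by positivity
          have hut : (i:ℝ) * t / N ≤ t := by
            rw [div_le_iff₀ hN0]; nlinarith
          have hdiff : ((i:ℝ)+1) * t / N - (i:ℝ) * t / N = t / N := by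
            field_simp; ring
          have htN : (0:ℝ) ≤ t / N := by positivity
          rw [abs_mul]
          by_cases hc : (n:ℝ) * (((i:ℝ)+1) * t / N) ≤ j
          · have h1 : clampF n j (((i:ℝ)+1) * t / N) = 0 := clampF_of_le hc
            have h2 : clampF n j ((i:ℝ) * t / N) = 0 := by
              apply clampF_of_le
              refine le_trans ?_ hc
              have : (i:ℝ) * t / N ≤ ((i:ℝ)+1) * t / N := by linarith
              nlinarith [Nat.cast_nonneg (α := ℝ) n]
            rw [h1, h2, sub_self, abs_zero, mul_zero]
            positivity
          · push_neg at hc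
            have hb1 : |f ((i:ℝ) * t / N) - 1| ≤ (n:ℝ) * t / N := by
              refine le_trans (Hf _ hu0 hut) ?_
              apply max_le (by positivity)
              have h3 : (n:ℝ) * ((i:ℝ) * t / N) ≤ (n:ℝ) * (((i:ℝ)+1) * t / N) - 0 := by
                have : (i:ℝ) * t / N ≤ ((i:ℝ)+1) * t / N := by linarith
                nlinarith [Nat.cast_nonneg (α := ℝ) n]
              calc j - (n:ℝ) * ((i:ℝ) * t / N)
                  ≤ (n:ℝ) * (((i:ℝ)+1) * t / N) - (n:ℝ) * ((i:ℝ) * t / N) := by linarith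
                _ = (n:ℝ) * (((i:ℝ)+1) * t / N - (i:ℝ) * t / N) := by ring
                _ = (n:ℝ) * t / N := by rw [hdiff]; ring
            have hb2 : |clampF n j (((i:ℝ)+1) * t / N) - clampF n j ((i:ℝ) * t / N)|
                ≤ (n:ℝ) * t / N := by
              refine le_trans (clampF_lip j _ _) ?_
              rw [hdiff, abs_of_nonneg (by positivity), mul_div_assoc]
            calc |f ((i:ℝ) * t / N) - 1| *
                  |clampF n j (((i:ℝ)+1) * t / N) - clampF n j ((i:ℝ) * t / N)|
                ≤ ((n:ℝ) * t / N) * ((n:ℝ) * t / N) :=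
                  mul_le_mul hb1 hb2 (abs_nonneg _) (by positivity)
              _ = (n:ℝ)^2 * t^2 / N^2 := by ring
      _ = (n:ℝ)^2 * t^2 / N := by
          rw [Finset.sum_const, Finset.card_range, nsmul_eq_mul]
          field_simp
  have hlim : Tendsto (fun N : ℕ => ∑ i ∈ Finset.range N, f ((i:ℝ) * t / N) *
      (clampF n j (((i:ℝ)+1) * t / N) - clampF n j ((i:ℝ) * t / N))) atTop
      (nhds (clampF n j t)) := by
    rw [tendsto_iff_dist_tendsto_zero]
    apply squeeze_zero' (Filter.Eventually.of_forall fun N => dist_nonneg)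
    · exact Filter.eventually_atTop.2 ⟨1, fun N hN => by simpa [Real.dist_eq] using key N hN⟩
    · simpa using tendsto_const_div_atTop_nhds_zero_nat ((n:ℝ)^2 * t^2)
  unfold rsIntegral
  have : (fun N : ℕ => ∑ i ∈ Finset.range N,
      f (0 + (i : ℝ) * (t - 0) / (N : ℝ)) *
        (clampF n j (0 + ((i : ℝ) + 1) * (t - 0) / (N : ℝ))
          - clampF n j (0 + (i : ℝ) * (t - 0) / (N : ℝ))))
      = (fun N : ℕ => ∑ i ∈ Finset.range N, f ((i:ℝ) * t / N) *
      (clampF n j (((i:ℝ)+1) * t / N) - clampF n j ((i:ℝ) * t / N))) := by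
    funext N; apply Finset.sum_congr rfl; intro i _; norm_num
  rw [this]
  exact hlim.limUnder_eq

lemma sig_vanish {n : ℕ} (w : List (Fin n)) (j : Fin n) {t : ℝ}
    (ht0 : 0 ≤ t) (htj : (n:ℝ) * t ≤ ((j:ℕ):ℝ)) :
    sigAux (axisPath n) 0 (j :: w) t = 0 := by
  show rsIntegral (fun s => sigAux (axisPath n) 0 w s) (fun s => axisPath n s j) 0 t = 0
  apply rs_eq_zero _ _ t ht0
  intro u v hu huv hvt
  have hn0 : (0:ℝ) ≤ n := Nat.cast_nonneg n
  have h1 : axisPath n v j = 0 := clampF_of_le (le_trans (by nlinarith) htj)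
  have h2 : axisPath n u j = 0 := clampF_of_le (le_trans (by nlinarith) htj)
  show sigAux (axisPath n) 0 w u * (axisPath n v j - axisPath n u j) = 0
  rw [h1, h2, sub_self, mul_zero]

lemma sig_broken {n : ℕ} (w : List (Fin n)) (a b : Fin n) (hab : b < a) {t : ℝ}
    (ht0 : 0 ≤ t) :
    sigAux (axisPath n) 0 (b :: a :: w) t = 0 := by
  show rsIntegral (fun s => sigAux (axisPath n) 0 (a :: w) s) (fun s => axisPath n s b) 0 t = 0
  apply rs_eq_zero _ _ t ht0
  intro u v hu huv hvt
  have hn0 : (0:ℝ) ≤ n := Nat.cast_nonneg n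
  have hba : ((b:ℕ):ℝ) + 1 ≤ ((a:ℕ):ℝ) := by
    have : (b:ℕ) + 1 ≤ (a:ℕ) := Nat.succ_le_of_lt hab
    exact_mod_cast this
  by_cases hc : (n:ℝ) * u ≤ ((b:ℕ):ℝ) + 1
  · have h0 : sigAux (axisPath n) 0 (a :: w) u = 0 := sig_vanish w a hu (le_trans hc hba)
    show sigAux (axisPath n) 0 (a :: w) u * (axisPath n v b - axisPath n u b) = 0
    rw [h0, zero_mul]
  · push_neg at hc
    have h1 : axisPath n u b = 1 := clampF_of_ge (le_of_lt hc)
    have h2 : axisPath n v b = 1 := clampF_of_ge (le_trans (le_of_lt hc) (by nlinarith))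
    show sigAux (axisPath n) 0 (a :: w) u * (axisPath n v b - axisPath n u b) = 0
    rw [h1, h2, sub_self, mul_zero]

lemma sigAux_zero_append {n : ℕ} (wl : List (Fin n))
    (hw : ∀ t : ℝ, 0 ≤ t → t ≤ 1 → sigAux (axisPath n) 0 wl t = 0)
    (rl : List (Fin n)) : ∀ t : ℝ, 0 ≤ t → t ≤ 1 → sigAux (axisPath n) 0 (rl ++ wl) t = 0 := by
  induction rl with
  | nil => simpa using hw
  | cons j rl ih =>
    intro t ht0 ht1
    show rsIntegral (fun s => sigAux (axisPath n) 0 (rl ++ wl) s) (fun s => axisPath n s j) 0 t = 0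
    apply rs_eq_zero _ _ t ht0
    intro u v hu huv hvt
    show sigAux (axisPath n) 0 (rl ++ wl) u * (axisPath n v j - axisPath n u j) = 0
    rw [ih u hu (le_trans (le_trans huv hvt) ht1), zero_mul]

lemma sig_ident (n : ℕ) :
    ∀ k : ℕ, k ≤ n → ∀ t : ℝ, 0 ≤ t → t ≤ 1 →
      sigAux (axisPath n) 0 ((List.finRange n).take k).reverse t = clampF n ((k:ℝ) - 1) t := by
  intro k
  induction k with
  | zero =>
    intro _ t ht0 ht1
    have hn0 : (0:ℝ) ≤ n := Nat.cast_nonneg n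
    have : clampF n ((0:ℝ) - 1) t = 1 := clampF_of_ge (by nlinarith)
    simp only [List.take_zero, List.reverse_nil, Nat.cast_zero, this]
    rfl
  | succ k ih =>
    intro hk t ht0 ht1
    have hkn : k < n := hk
    have hfr : (List.finRange n).take (k+1)
        = (List.finRange n).take k ++ [(⟨k, hkn⟩ : Fin n)] := by
      rw [List.take_succ]
      congr 1
      rw [List.getElem?_eq_getElem (by simpa using hkn)]
      simp
    rw [hfr, List.reverse_append, List.reverse_singleton, List.singleton_append]
    push_cast
    show rsIntegral (fun s => sigAux (axisPath n) 0 ((List.finRange n).take k).reverse s)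
      (fun s => axisPath n s ⟨k, hkn⟩) 0 t = clampF n (((k:ℕ)+1:ℝ) - 1) t
    have hg : (fun s => axisPath n s (⟨k, hkn⟩ : Fin n)) = clampF n ((k:ℕ):ℝ) := rfl
    rw [hg]
    have h := rs_step n ((k:ℕ):ℝ) (Nat.cast_nonneg k)
      (fun s => sigAux (axisPath n) 0 ((List.finRange n).take k).reverse s) t ht0 (by
        intro s hs0 hst
        rw [ih (le_of_lt hkn) s hs0 (le_trans hst ht1)]
        exact clampF_near_one (k:ℝ) s)
    rw [h]
    norm_num

/-- for the axis path `z = e₁ * ⋯ * eₙ` and any word `J` that is a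
permutation of `(1,…,n)`, the signature coefficient `S(z)^J` is `1` if
`J = (1,…,n)` and `0` otherwise. -/
theorem axis_path_order_isolation (n : ℕ) (J : Fin n → Fin n)
    (hJ : (List.ofFn J).Perm (List.finRange n)) :
    sigCoeff (axisPath n) 0 (List.ofFn J) 1
      = if ∀ i, J i = i then 1 else 0 := by
  by_cases hid : ∀ i, J i = i
  · rw [if_pos hid]
    have hL : List.ofFn J = List.finRange n := by
      have : J = id := funext hid
      rw [this, List.ofFn_id]
    show sigAux (axisPath n) 0 (List.ofFn J).reverse 1 = 1
    rw [hL]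
    have h := sig_ident n n le_rfl 1 zero_le_one le_rfl
    rw [List.take_of_length_le (by simp)] at h
    rw [h]
    have : ((n:ℝ) - 1) + 1 ≤ (n:ℝ) * 1 := by linarith
    exact clampF_of_ge this
  · rw [if_neg hid]
    have hdesc : ∃ k : ℕ, ∃ hk : k + 1 < n, J ⟨k+1, hk⟩ < J ⟨k, by omega⟩ := by
      by_contra hcon
      push_neg at hcon
      apply hid
      have hchain : (List.ofFn J).IsChain (· ≤ ·) := by
        rw [List.isChain_iff_getElem]
        intro i hi
        have hi' : i + 1 < n := by
          simpa using hi
        simp only [List.getElem_ofFn]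
        exact hcon i hi'
      have hsorted : (List.ofFn J).Pairwise (· ≤ ·) := List.isChain_iff_pairwise.mp hchain
      have heq : List.ofFn J = List.finRange n :=
        List.Perm.eq_of_pairwise' hsorted (List.pairwise_le_finRange n) hJ
      intro i
      have h2 := List.getElem_of_eq heq (show (i:ℕ) < (List.ofFn J).length by
        simp [List.length_ofFn])
      simpa [List.getElem_ofFn, List.getElem_finRange] using h2
    obtain ⟨k, hk1, hlt⟩ := hdesc
    have hkn : k < n := by omega
    have htake : (List.ofFn J).take (k+2)
        = (((List.ofFn J).take k ++ [J ⟨k, hkn⟩]) ++ [J ⟨k+1, hk1⟩]) := by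
      rw [show k + 2 = (k+1)+1 from rfl, List.take_succ, List.take_succ,
        List.getElem?_ofFn, List.getElem?_ofFn]
      simp [List.ofFnNthVal, hkn, hk1]
    have hsplit : (List.ofFn J).reverse = ((List.ofFn J).drop (k+2)).reverse
        ++ (J ⟨k+1, hk1⟩ :: J ⟨k, hkn⟩ :: ((List.ofFn J).take k).reverse) := by
      conv_lhs => rw [← List.take_append_drop (k+2) (List.ofFn J)]
      rw [List.reverse_append, htake]
      simp [List.reverse_append]
    show sigAux (axisPath n) 0 (List.ofFn J).reverse 1 = 0
    rw [hsplit]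
    exact sigAux_zero_append _
      (fun t ht0 _ => sig_broken _ _ _ hlt ht0) _ 1 zero_le_one le_rfl
end

section
/- Let $I_1,\ldots,I_m$ be multi-indices of lengths $l_1,\ldots,l_m$ with $l_1+\cdots+l_m = n$, set $j_i = l_1+\cdots+l_i$, and let $z : [0,1]\to\mathbb{R}^n$ be the concatenation of linear paths with increments $v_1 = e_1+\cdots+e_{j_1}$, $v_2 = e_{j_1+1}+\cdots+e_{j_2}$, ..., $v_m = e_{j_{m-1}+1}+\cdots+e_n$. Then for every multi-index $J \in \mathcal{P}(1,\ldots,n)$, $S(z)^J = \frac{1}{l_1!\cdots l_m!}$ if $J$ is a concatenation $J_1 * \cdots * J_m$ where $J_i$ is a permutation of $(j_{i-1}+1,\ldots,j_i)$, and $S(z)^J = 0$ otherwise. -/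
open Filter

/-- Partial sums `S(i) = l₀ + ⋯ + l_{i-1}` of the block lengths. -/
def blockPartialSum (l : ℕ → ℕ) (i : ℕ) : ℕ := ∑ p ∈ Finset.range i, l p

/-- The index of the block containing coordinate `q`: the number of completed
blocks `i < m` with `S(i+1) ≤ q`. -/
def blockOf (l : ℕ → ℕ) (m q : ℕ) : ℕ :=
  ((Finset.range m).filter (fun i => blockPartialSum l (i + 1) ≤ q)).card

/-- The concatenation of linear paths with increments
`v₁ = e₁+⋯+e_{j₁}`, `v₂ = e_{j₁+1}+⋯+e_{j₂}`, …: coordinate `q` rises linearly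
from `0` to `1` on the sub-interval `[blockOf(q)/m, (blockOf(q)+1)/m]`. -/
noncomputable def blockConcatPath (l : ℕ → ℕ) (m n : ℕ) : ℝ → Fin n → ℝ :=
  fun t q => max 0 (min 1 ((m : ℝ) * t - (blockOf l m (q : ℕ) : ℝ)))

section RSAux
open MeasureTheory Set intervalIntegral

noncomputable def gB (m c : ℕ) (t : ℝ) : ℝ := max 0 (min 1 ((m : ℝ) * t - (c : ℝ)))

noncomputable def hB (m c : ℕ) (s : ℝ) : ℝ :=
  (Set.Ico ((c : ℝ) / (m : ℝ)) (((c : ℝ) + 1) / (m : ℝ))).indicator (fun _ => (m : ℝ)) s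

lemma gB_cont (m c : ℕ) : Continuous (gB m c) := by
  unfold gB; fun_prop

lemma gB_nonneg (m c : ℕ) (t : ℝ) : 0 ≤ gB m c t := le_max_left _ _

lemma gB_le_one (m c : ℕ) (t : ℝ) : gB m c t ≤ 1 := by
  unfold gB
  rcases le_or_gt (min 1 ((m:ℝ)*t - c)) 0 with h | h
  · rw [max_eq_left h]; norm_num
  · rw [max_eq_right h.le]; exact min_le_left _ _

lemma gB_eq_zero {m c : ℕ} {t : ℝ} (h : (m : ℝ) * t ≤ c) : gB m c t = 0 := by
  unfold gB
  rw [min_eq_right (by linarith), max_eq_left (by linarith)]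

lemma gB_eq_one {m c : ℕ} {t : ℝ} (h : (c : ℝ) + 1 ≤ (m : ℝ) * t) : gB m c t = 1 := by
  unfold gB
  rw [min_eq_left (by linarith), max_eq_right (by norm_num)]

lemma gB_eq_lin {m c : ℕ} {t : ℝ} (h1 : (c : ℝ) ≤ (m : ℝ) * t) (h2 : (m : ℝ) * t ≤ (c : ℝ) + 1) :
    gB m c t = (m : ℝ) * t - c := by
  unfold gB
  rw [min_eq_right (by linarith), max_eq_right (by linarith)]

lemma gB_zero (m c : ℕ) : gB m c 0 = 0 := gB_eq_zero (by simp)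

lemma mul_hB_eq_indicator (m c : ℕ) (ψ : ℝ → ℝ) :
    (fun s => ψ s * hB m c s)
      = (Set.Ico ((c : ℝ) / (m : ℝ)) (((c : ℝ) + 1) / (m : ℝ))).indicator (fun s => ψ s * (m : ℝ)) := by
  funext s
  by_cases hs : s ∈ Set.Ico ((c : ℝ) / (m : ℝ)) (((c : ℝ) + 1) / (m : ℝ))
  · simp [hB, Set.indicator_of_mem hs]
  · simp [hB, Set.indicator_of_notMem hs]

lemma intervalIntegrable_mul_hB (m c : ℕ) {ψ : ℝ → ℝ} (hψ : Continuous ψ) (x y : ℝ) :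
    IntervalIntegrable (fun s => ψ s * hB m c s) volume x y := by
  rw [mul_hB_eq_indicator, intervalIntegrable_iff]
  exact (intervalIntegrable_iff.1 ((hψ.mul continuous_const).intervalIntegrable x y)).indicator
    measurableSet_Ico

lemma hB_abs_le (m c : ℕ) (s : ℝ) : |hB m c s| ≤ (m : ℝ) := by
  unfold hB
  by_cases hs : s ∈ Set.Ico ((c : ℝ) / (m : ℝ)) (((c : ℝ) + 1) / (m : ℝ))
  · rw [Set.indicator_of_mem hs]; rw [abs_of_nonneg (by positivity)]
  · rw [Set.indicator_of_notMem hs]; simp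

lemma ftcA (m : ℕ) (hm : 1 ≤ m) (c r : ℕ) {x y : ℝ} (hxy : x ≤ y) :
    ∫ s in x..y, (gB m c s) ^ r * hB m c s
      = (gB m c y) ^ (r + 1) / ((r : ℝ) + 1) - (gB m c x) ^ (r + 1) / ((r : ℝ) + 1) := by
  have hM : (0 : ℝ) < m := by exact_mod_cast hm
  have hr1 : ((r : ℝ) + 1) ≠ 0 := by positivity
  apply intervalIntegral.integral_eq_sub_of_hasDeriv_right_of_le hxy
  · exact (((gB_cont m c).pow (r+1)).div_const _).continuousOn
  · intro s _
    by_cases h1 : s < (c : ℝ) / (m : ℝ)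
    · have hB0 : hB m c s = 0 := by
        apply Set.indicator_of_notMem
        simp only [Set.mem_Ico, not_and_or, not_le]
        exact Or.inl h1
      rw [hB0, mul_zero]
      have hev : (fun u => (gB m c u) ^ (r+1) / ((r : ℝ) + 1)) =ᶠ[nhds s] (fun _ => (0:ℝ)) := by
        filter_upwards [Iio_mem_nhds h1] with u hu
        rw [gB_eq_zero (le_of_lt ((lt_div_iff₀' hM).1 hu))]
        simp
      exact (hev.hasDerivAt_iff.2 (hasDerivAt_const s 0)).hasDerivWithinAt
    · push_neg at h1
      by_cases h2 : s < ((c : ℝ) + 1) / (m : ℝ)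
      · have hmem : s ∈ Set.Ico ((c : ℝ) / (m : ℝ)) (((c : ℝ) + 1) / (m : ℝ)) := ⟨h1, h2⟩
        have hBs : hB m c s = (m : ℝ) := Set.indicator_of_mem hmem _
        have hcs : (c : ℝ) ≤ (m : ℝ) * s := (div_le_iff₀' hM).1 h1
        have hcs2 : (m : ℝ) * s < (c : ℝ) + 1 := (lt_div_iff₀' hM).1 h2
        have hgBs : gB m c s = (m : ℝ) * s - c := gB_eq_lin hcs hcs2.le
        have hQ : HasDerivAt (fun u => ((m:ℝ)*u - (c:ℝ)) ^ (r+1) / ((r:ℝ)+1))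
            (((m:ℝ)*s - c) ^ r * (m:ℝ)) s := by
          have h0 : HasDerivAt (fun u : ℝ => (m:ℝ)*u - (c:ℝ)) (m:ℝ) s := by
            simpa using ((hasDerivAt_id s).const_mul (m:ℝ)).sub_const (c:ℝ)
          have := (h0.pow (r+1)).div_const ((r:ℝ)+1)
          refine this.congr_deriv ?_
          rw [Nat.add_sub_cancel, div_eq_iff hr1]
          push_cast
          ring
        rw [hBs, hgBs]
        refine hQ.hasDerivWithinAt.congr_of_eventuallyEq ?_ (by rw [hgBs])
        filter_upwards [self_mem_nhdsWithin, mem_nhdsWithin_of_mem_nhds (Iio_mem_nhds h2)]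
          with u hu1 hu2
        have hu1' : s < u := hu1
        have ha : (c:ℝ) ≤ (m:ℝ) * u := le_trans hcs (by nlinarith)
        have hb : (m:ℝ) * u < (c:ℝ) + 1 := (lt_div_iff₀' hM).1 hu2
        rw [gB_eq_lin ha hb.le]
      · push_neg at h2
        have hB0 : hB m c s = 0 := by
          apply Set.indicator_of_notMem
          simp only [Set.mem_Ico, not_and_or, not_lt]
          exact Or.inr h2
        rw [hB0, mul_zero]
        have hgs : gB m c s = 1 := gB_eq_one ((div_le_iff₀' hM).1 h2)
        have hconst : HasDerivWithinAt (fun _ : ℝ => (1:ℝ)^(r+1)/((r:ℝ)+1)) 0 (Set.Ioi s) s :=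
          (hasDerivAt_const s _).hasDerivWithinAt
        refine hconst.congr_of_eventuallyEq ?_ (by rw [hgs])
        filter_upwards [self_mem_nhdsWithin] with u hu
        have : s ≤ u := le_of_lt hu
        rw [gB_eq_one ?_]
        have := (div_le_iff₀' hM).1 h2
        nlinarith
  · exact intervalIntegrable_mul_hB m c ((gB_cont m c).pow r) x y

lemma hB_integral (m : ℕ) (hm : 1 ≤ m) (c : ℕ) {x y : ℝ} (hxy : x ≤ y) :
    ∫ s in x..y, hB m c s = gB m c y - gB m c x := by
  have := ftcA m hm c 0 hxy
  simpa using this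
lemma rs_congr (f₁ f₂ g : ℝ → ℝ) {t : ℝ} (ht : 0 ≤ t)
    (h : ∀ s, 0 ≤ s → s ≤ t → f₁ s = f₂ s) :
    rsIntegral f₁ g 0 t = rsIntegral f₂ g 0 t := by
  unfold rsIntegral
  congr 1
  funext N
  refine Finset.sum_congr rfl fun i hi => ?_
  have hiN : i < N := Finset.mem_range.1 hi
  have hN : (0:ℝ) < N := by exact_mod_cast lt_of_le_of_lt (Nat.zero_le i) hiN
  have h0 : (0:ℝ) ≤ 0 + (i:ℝ) * (t - 0) / (N:ℝ) := by
    rw [zero_add, sub_zero]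
    exact div_nonneg (mul_nonneg (Nat.cast_nonneg i) ht) hN.le
  rw [h _ h0 ?_]
  rw [zero_add, sub_zero, div_le_iff₀ hN]
  have : (i:ℝ) ≤ (N:ℝ) := by exact_mod_cast hiN.le
  nlinarith

lemma rs_zero (g : ℝ → ℝ) (a b : ℝ) : rsIntegral (fun _ => 0) g a b = 0 := by
  unfold rsIntegral
  simp only [zero_mul, Finset.sum_const_zero]
  exact Filter.Tendsto.limUnder_eq tendsto_const_nhds

lemma rs_eq (m : ℕ) (hm : 1 ≤ m) (c : ℕ) (f : ℝ → ℝ) (hf : Continuous f) {t : ℝ} (ht : 0 ≤ t) :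
    rsIntegral f (gB m c) 0 t = ∫ s in (0:ℝ)..t, f s * hB m c s := by
  have hM : (0 : ℝ) < m := by exact_mod_cast hm
  set I := ∫ s in (0:ℝ)..t, f s * hB m c s with hI
  have hint : ∀ x y : ℝ, IntervalIntegrable (fun s => f s * hB m c s) volume x y :=
    fun x y => intervalIntegrable_mul_hB m c hf x y
  have hfun : (fun N : ℕ =>
      ∑ i ∈ Finset.range N,
        f (0 + (i : ℝ) * (t - 0) / (N : ℝ)) *
          (gB m c (0 + ((i : ℝ) + 1) * (t - 0) / (N : ℝ)) - gB m c (0 + (i : ℝ) * (t - 0) / (N : ℝ))))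
      = fun N : ℕ => ∑ i ∈ Finset.range N,
        f ((i : ℝ) * t / (N : ℝ)) *
          (gB m c (((i + 1 : ℕ) : ℝ) * t / (N : ℝ)) - gB m c ((i : ℝ) * t / (N : ℝ))) := by
    funext N
    refine Finset.sum_congr rfl fun i _ => ?_
    push_cast
    ring_nf
  have key : Filter.Tendsto (fun N : ℕ => ∑ i ∈ Finset.range N,
        f ((i : ℝ) * t / (N : ℝ)) *
          (gB m c (((i + 1 : ℕ) : ℝ) * t / (N : ℝ)) - gB m c ((i : ℝ) * t / (N : ℝ))))
      atTop (nhds I) := by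
    rw [Metric.tendsto_atTop]
    intro ε hε
    have hMt : (0:ℝ) ≤ (m:ℝ) * t := by positivity
    set ε' := ε / ((m:ℝ) * t + 1) with hε'def
    have hε' : 0 < ε' := by positivity
    have huc := (isCompact_Icc (a := (0:ℝ)) (b := t)).uniformContinuousOn_of_continuous
      hf.continuousOn
    obtain ⟨δ, hδ, hδ'⟩ := Metric.uniformContinuousOn_iff.1 huc ε' hε'
    obtain ⟨N₁, hN₁⟩ := exists_nat_gt (t / δ)
    refine ⟨max N₁ 1, fun N hN => ?_⟩
    have hN1 : 1 ≤ N := le_trans (le_max_right _ _) hN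
    have hNpos : (0:ℝ) < N := by exact_mod_cast hN1
    have hNR : (N₁ : ℝ) ≤ N := by exact_mod_cast le_trans (le_max_left _ _) hN
    have hstep : t / N < δ := by
      have h1 : t / δ < N := lt_of_lt_of_le hN₁ hNR
      rw [div_lt_iff₀ hδ] at h1
      rw [div_lt_iff₀ hNpos]
      nlinarith
    set φ : ℕ → ℝ := fun i => (i : ℝ) * t / (N : ℝ) with hφdef
    have hφmono : ∀ i j : ℕ, i ≤ j → φ i ≤ φ j := by
      intro i j hij
      simp only [hφdef]
      have hij' : (i:ℝ) ≤ j := by exact_mod_cast hij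
      gcongr
    have hφ0 : φ 0 = 0 := by simp [hφdef]
    have hφN : φ N = t := by
      simp only [hφdef]
      field_simp
    have hmem : ∀ i, i ≤ N → φ i ∈ Set.Icc (0:ℝ) t := by
      intro i hi
      constructor
      · positivity
      · rw [hφdef, div_le_iff₀ hNpos]
        have : (i:ℝ) ≤ (N:ℝ) := by exact_mod_cast hi
        nlinarith
    have hgap : ∀ i : ℕ, φ (i+1) - φ i = t / N := by
      intro i
      simp only [hφdef]
      push_cast
      field_simp
      ring
    have hIsum : I = ∑ i ∈ Finset.range N, ∫ s in φ i..φ (i+1), f s * hB m c s := by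
      have h2 := intervalIntegral.sum_integral_adjacent_intervals (a := φ) (n := N)
        (fun k _ => hint _ _)
      rw [hφ0, hφN] at h2
      exact hI.trans h2.symm
    have hterm : ∀ i ∈ Finset.range N,
        f (φ i) * (gB m c (φ (i+1)) - gB m c (φ i)) - (∫ s in φ i..φ (i+1), f s * hB m c s)
          = ∫ s in φ i..φ (i+1), (f (φ i) - f s) * hB m c s := by
      intro i _
      rw [← hB_integral m hm c (hφmono i (i+1) (Nat.le_succ i)),
        ← intervalIntegral.integral_const_mul,
        ← intervalIntegral.integral_sub
          (intervalIntegrable_mul_hB m c continuous_const _ _) (hint _ _)]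
      congr 1
      funext s
      ring
    have hbound : ∀ i ∈ Finset.range N,
        |f (φ i) * (gB m c (φ (i+1)) - gB m c (φ i)) - (∫ s in φ i..φ (i+1), f s * hB m c s)|
          ≤ ε' * (m:ℝ) * (t / N) := by
      intro i hi
      have hiN : i < N := Finset.mem_range.1 hi
      rw [hterm i hi]
      have h1 := intervalIntegral.norm_integral_le_of_norm_le_const
        (C := ε' * (m:ℝ)) (f := fun s => (f (φ i) - f s) * hB m c s)
        (a := φ i) (b := φ (i+1)) ?_
      · rw [Real.norm_eq_abs] at h1
        refine h1.trans ?_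
        rw [hgap i, abs_of_nonneg (by positivity)]
      · intro s hs
        rw [Set.uIoc_of_le (hφmono i (i+1) (Nat.le_succ i))] at hs
        have hs1 : φ i < s := hs.1
        have hs2 : s ≤ φ (i+1) := hs.2
        have hsIcc : s ∈ Set.Icc (0:ℝ) t :=
          ⟨le_trans (hmem i hiN.le).1 hs1.le, le_trans hs2 (hmem (i+1) hiN).2⟩
        have hdist : dist (φ i) s < δ := by
          rw [Real.dist_eq, abs_of_nonpos (by linarith)]
          have := hgap i
          linarith
        have hfc : |f (φ i) - f s| < ε' := by
          have := hδ' (φ i) (hmem i hiN.le) s hsIcc hdist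
          rwa [Real.dist_eq] at this
        rw [Real.norm_eq_abs, abs_mul]
        exact mul_le_mul hfc.le (hB_abs_le m c s) (abs_nonneg _) hε'.le
    have hdist : dist
        (∑ i ∈ Finset.range N, f (φ i) * (gB m c (φ (i+1)) - gB m c (φ i))) I < ε := by
      rw [Real.dist_eq, hIsum, ← Finset.sum_sub_distrib]
      calc |∑ i ∈ Finset.range N,
            (f (φ i) * (gB m c (φ (i+1)) - gB m c (φ i)) - ∫ s in φ i..φ (i+1), f s * hB m c s)|
          ≤ ∑ i ∈ Finset.range N,
            |f (φ i) * (gB m c (φ (i+1)) - gB m c (φ i)) - ∫ s in φ i..φ (i+1), f s * hB m c s| :=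
            Finset.abs_sum_le_sum_abs _ _
        _ ≤ ∑ _i ∈ Finset.range N, ε' * (m:ℝ) * (t / N) := Finset.sum_le_sum hbound
        _ = ε' * ((m:ℝ) * t) := by
            rw [Finset.sum_const, Finset.card_range, nsmul_eq_mul]
            field_simp
        _ < ε := by
            rw [hε'def, div_mul_eq_mul_div, div_lt_iff₀ (by positivity)]
            nlinarith
    simpa only [hφdef] using hdist
  unfold rsIntegral
  rw [hfun]
  exact key.limUnder_eq

lemma bps_mono (l : ℕ → ℕ) : Monotone (blockPartialSum l) := by
  intro i j hij
  exact Finset.sum_le_sum_of_subset (Finset.range_subset_range.2 hij)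

lemma bps_succ (l : ℕ → ℕ) (i : ℕ) : blockPartialSum l (i+1) = blockPartialSum l i + l i :=
  Finset.sum_range_succ l i

lemma blockOf_mono (l : ℕ → ℕ) (m : ℕ) {q q' : ℕ} (h : q ≤ q') :
    blockOf l m q ≤ blockOf l m q' := by
  apply Finset.card_le_card
  intro i hi
  simp only [Finset.mem_filter] at *
  exact ⟨hi.1, le_trans hi.2 h⟩

lemma blockOf_eq_of (l : ℕ → ℕ) {m c q : ℕ} (hc : c < m)
    (h1 : blockPartialSum l c ≤ q) (h2 : q < blockPartialSum l (c+1)) :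
    blockOf l m q = c := by
  unfold blockOf
  have : (Finset.range m).filter (fun i => blockPartialSum l (i + 1) ≤ q) = Finset.range c := by
    ext i
    simp only [Finset.mem_filter, Finset.mem_range]
    constructor
    · rintro ⟨him, hile⟩
      by_contra hic
      push_neg at hic
      exact absurd (le_trans (bps_mono l (by omega : c + 1 ≤ i + 1)) hile) (by omega)
    · intro hic
      exact ⟨by omega, le_trans (bps_mono l (by omega : i + 1 ≤ c)) h1⟩
  rw [this, Finset.card_range]

lemma blockOf_spec (l : ℕ → ℕ) {m n q : ℕ} (hm : 1 ≤ m) (hsum : blockPartialSum l m = n)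
    (hq : q < n) :
    blockOf l m q < m ∧ blockPartialSum l (blockOf l m q) ≤ q ∧
      q < blockPartialSum l (blockOf l m q + 1) := by
  classical
  set c := Nat.findGreatest (fun i => blockPartialSum l i ≤ q) m with hc
  have hspec : blockPartialSum l c ≤ q :=
    Nat.findGreatest_spec (P := fun i => blockPartialSum l i ≤ q) (Nat.zero_le m)
      (by simp [blockPartialSum])
  have hcm : c ≤ m := Nat.findGreatest_le m
  have hclt : c < m := by
    rcases Nat.lt_or_ge c m with h | h
    · exact h
    · exfalso
      have : c = m := le_antisymm hcm h
      rw [this, hsum] at hspec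
      omega
  have hgt : q < blockPartialSum l (c+1) := by
    by_contra hcon
    push_neg at hcon
    exact Nat.findGreatest_is_greatest (P := fun i => blockPartialSum l i ≤ q) (n := m)
      (by rw [← hc]; omega) (by omega) hcon
  have := blockOf_eq_of l hclt hspec hgt
  rw [this]
  exact ⟨hclt, hspec, hgt⟩

lemma blockOf_lt (l : ℕ → ℕ) {m n q : ℕ} (hm : 1 ≤ m) (hsum : blockPartialSum l m = n)
    (hq : q < n) : blockOf l m q < m :=
  (blockOf_spec l hm hsum hq).1

lemma blockOf_count (l : ℕ → ℕ) {m n : ℕ} (hm : 1 ≤ m) (hsum : blockPartialSum l m = n)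
    {c : ℕ} (hc : c < m) :
    ((Finset.range n).filter (fun q => blockOf l m q = c)).card = l c := by
  have : (Finset.range n).filter (fun q => blockOf l m q = c)
      = Finset.Ico (blockPartialSum l c) (blockPartialSum l (c+1)) := by
    ext q
    simp only [Finset.mem_filter, Finset.mem_range, Finset.mem_Ico]
    constructor
    · rintro ⟨hq, rfl⟩
      exact ⟨(blockOf_spec l hm hsum hq).2.1, (blockOf_spec l hm hsum hq).2.2⟩
    · rintro ⟨h1, h2⟩
      have hq : q < n := by
        have := bps_mono l (by omega : c + 1 ≤ m)
        omega
      exact ⟨hq, blockOf_eq_of l hc h1 h2⟩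
  rw [this, Nat.card_Ico, bps_succ]
  omega

def cntB (n m : ℕ) (l : ℕ → ℕ) (V : List (Fin n)) (c : ℕ) : ℕ :=
  V.countP (fun q : Fin n => decide (blockOf l m q.val = c))

lemma sig_key (n m : ℕ) (hm : 1 ≤ m) (l : ℕ → ℕ) (hsum : blockPartialSum l m = n)
    (V : List (Fin n)) :
    ∀ t : ℝ, 0 ≤ t →
      ((V.Pairwise (fun p q : Fin n => blockOf l m q.val ≤ blockOf l m p.val) →
        sigAux (blockConcatPath l m n) 0 V t
          = ∏ c ∈ Finset.range m,
              (gB m c t) ^ (cntB n m l V c) / ((cntB n m l V c).factorial : ℝ)) ∧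
      (¬ V.Pairwise (fun p q : Fin n => blockOf l m q.val ≤ blockOf l m p.val) →
        sigAux (blockConcatPath l m n) 0 V t = 0)) := by
  have hM : (0 : ℝ) < m := by exact_mod_cast hm
  induction V with
  | nil =>
    intro t ht
    refine ⟨fun _ => ?_, fun hns => absurd List.Pairwise.nil hns⟩
    show (1 : ℝ) = _
    symm
    apply Finset.prod_eq_one
    intro c _
    simp [cntB, Nat.factorial]
  | cons j V ih =>
    intro t ht
    have hbm : blockOf l m (j : ℕ) < m := blockOf_lt l hm hsum j.isLt
    have hsig : sigAux (blockConcatPath l m n) 0 (j :: V) t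
        = rsIntegral (fun s => sigAux (blockConcatPath l m n) 0 V s)
            (gB m (blockOf l m (j : ℕ))) 0 t := rfl
    by_cases hVs : V.Pairwise (fun p q : Fin n => blockOf l m q.val ≤ blockOf l m p.val)
    case neg =>
      have h0 : sigAux (blockConcatPath l m n) 0 (j :: V) t = 0 := by
        rw [hsig, rs_congr _ (fun _ => (0:ℝ)) _ ht (fun s hs _ => (ih s hs).2 hVs), rs_zero]
      exact ⟨fun hsorted => absurd (List.pairwise_cons.1 hsorted).2 hVs, fun _ => h0⟩
    case pos =>
    set fV : ℝ → ℝ := fun s => ∏ c ∈ Finset.range m,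
        (gB m c s) ^ (cntB n m l V c) / ((cntB n m l V c).factorial : ℝ) with hfVdef
    have hcont : Continuous fV := by
      apply continuous_finset_prod
      intro c _
      exact ((gB_cont m c).pow _).div_const _
    have h1 : sigAux (blockConcatPath l m n) 0 (j :: V) t
        = ∫ s in (0:ℝ)..t, fV s * hB m (blockOf l m (j : ℕ)) s := by
      rw [hsig, rs_congr _ fV _ ht (fun s hs _ => (ih s hs).1 hVs),
        rs_eq m hm _ fV hcont ht]
    have hr' : ∀ c, cntB n m l (j :: V) c
        = cntB n m l V c + if blockOf l m (j : ℕ) = c then 1 else 0 := by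
      intro c
      unfold cntB
      rw [List.countP_cons]
      simp
    by_cases hall : ∀ p ∈ V, blockOf l m (p : ℕ) ≤ blockOf l m (j : ℕ)
    · refine ⟨fun _ => ?_, fun hns => absurd (List.pairwise_cons.2 ⟨hall, hVs⟩) hns⟩
      rw [h1]
      have hpt : (fun s => fV s * hB m (blockOf l m (j : ℕ)) s)
          = fun s => (∏ c ∈ Finset.range m, ((cntB n m l V c).factorial : ℝ)⁻¹)
              * ((gB m (blockOf l m (j : ℕ)) s) ^ (cntB n m l V (blockOf l m (j : ℕ)))
                  * hB m (blockOf l m (j : ℕ)) s) := by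
        funext s
        have hsplit : fV s = (∏ c ∈ Finset.range m, (gB m c s) ^ (cntB n m l V c))
            * (∏ c ∈ Finset.range m, ((cntB n m l V c).factorial : ℝ)⁻¹) := by
          rw [hfVdef]
          simp only [div_eq_mul_inv]
          rw [Finset.prod_mul_distrib]
        by_cases hmem : s ∈ Set.Ico ((blockOf l m (j : ℕ) : ℝ) / (m : ℝ))
            (((blockOf l m (j : ℕ) : ℝ) + 1) / (m : ℝ))
        · have hms : (blockOf l m (j : ℕ) : ℝ) ≤ (m : ℝ) * s := (div_le_iff₀' hM).1 hmem.1
          have hprod : ∏ c ∈ Finset.range m, (gB m c s) ^ (cntB n m l V c)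
              = (gB m (blockOf l m (j : ℕ)) s) ^ (cntB n m l V (blockOf l m (j : ℕ))) := by
            apply Finset.prod_eq_single_of_mem _ (Finset.mem_range.2 hbm)
            intro c _ hcB
            rcases Nat.eq_zero_or_pos (cntB n m l V c) with h0 | hpos
            · rw [h0, pow_zero]
            · obtain ⟨p', hp'V, hp'⟩ := List.countP_pos_iff.1 hpos
              have hc : blockOf l m (p' : ℕ) = c := by simpa using hp'
              have hcB' : c < blockOf l m (j : ℕ) :=
                lt_of_le_of_ne (hc ▸ hall p' hp'V) hcB
              have hc1 : (c : ℝ) + 1 ≤ (m : ℝ) * s := by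
                have : (c : ℝ) + 1 ≤ (blockOf l m (j : ℕ) : ℝ) := by exact_mod_cast hcB'
                linarith
              rw [gB_eq_one hc1, one_pow]
          rw [hsplit, hprod]
          ring
        · rw [show hB m (blockOf l m (j : ℕ)) s = 0 from Set.indicator_of_notMem hmem _]
          ring
      rw [hpt, intervalIntegral.integral_const_mul,
        ftcA m hm (blockOf l m (j : ℕ)) (cntB n m l V (blockOf l m (j : ℕ))) ht, gB_zero,
        zero_pow (Nat.succ_ne_zero _), zero_div, sub_zero]
      -- final algebra
      by_cases hg0 : gB m (blockOf l m (j : ℕ)) t = 0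
      · rw [hg0, zero_pow (Nat.succ_ne_zero _), zero_div, mul_zero]
        symm
        apply Finset.prod_eq_zero (Finset.mem_range.2 hbm)
        rw [hr' _, if_pos rfl, hg0, zero_pow (by omega), zero_div]
      · have hBt : (blockOf l m (j : ℕ) : ℝ) < (m : ℝ) * t := by
          by_contra hcon
          push_neg at hcon
          exact hg0 (gB_eq_zero hcon)
        have hRHS : ∀ c ∈ Finset.range m,
            (gB m c t) ^ (cntB n m l (j :: V) c) / ((cntB n m l (j :: V) c).factorial : ℝ)
              = if c = blockOf l m (j : ℕ) then
                  (gB m (blockOf l m (j : ℕ)) t) ^ (cntB n m l V (blockOf l m (j : ℕ)) + 1)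
                    / (((cntB n m l V (blockOf l m (j : ℕ)) + 1).factorial : ℝ))
                else ((cntB n m l V c).factorial : ℝ)⁻¹ := by
          intro c _
          by_cases hcB : c = blockOf l m (j : ℕ)
          · subst hcB
            rw [if_pos rfl, hr' _, if_pos rfl]
          · rw [if_neg hcB, hr' c, if_neg (fun h => hcB h.symm), add_zero]
            rcases Nat.lt_or_ge c (blockOf l m (j : ℕ)) with hlt | hge
            · have hc1 : (c : ℝ) + 1 ≤ (m : ℝ) * t := by
                have : (c : ℝ) + 1 ≤ (blockOf l m (j : ℕ) : ℝ) := by exact_mod_cast hlt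
                linarith
              rw [gB_eq_one hc1, one_pow, one_div]
            · have hcgt : blockOf l m (j : ℕ) < c := by omega
              have h0 : cntB n m l V c = 0 := by
                apply List.countP_eq_zero.2
                intro p' hp'
                simp only [decide_eq_true_eq]
                have := hall p' hp'
                omega
              rw [h0, pow_zero]
              simp [Nat.factorial]
        rw [Finset.prod_congr rfl hRHS,
          Finset.prod_eq_prod_diff_singleton_mul (Finset.mem_range.2 hbm)
            (fun c => ((cntB n m l V c).factorial : ℝ)⁻¹),
          Finset.prod_eq_prod_diff_singleton_mul (Finset.mem_range.2 hbm)
            (fun c => if c = blockOf l m (j : ℕ) then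
                  (gB m (blockOf l m (j : ℕ)) t) ^ (cntB n m l V (blockOf l m (j : ℕ)) + 1)
                    / (((cntB n m l V (blockOf l m (j : ℕ)) + 1).factorial : ℝ))
                else ((cntB n m l V c).factorial : ℝ)⁻¹)]
        rw [if_pos rfl]
        have hsame : ∏ c ∈ Finset.range m \ {blockOf l m (j : ℕ)},
            (if c = blockOf l m (j : ℕ) then
                  (gB m (blockOf l m (j : ℕ)) t) ^ (cntB n m l V (blockOf l m (j : ℕ)) + 1)
                    / (((cntB n m l V (blockOf l m (j : ℕ)) + 1).factorial : ℝ))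
                else ((cntB n m l V c).factorial : ℝ)⁻¹)
            = ∏ c ∈ Finset.range m \ {blockOf l m (j : ℕ)},
                ((cntB n m l V c).factorial : ℝ)⁻¹ := by
          apply Finset.prod_congr rfl
          intro c hc
          rw [if_neg (by simpa using (Finset.mem_sdiff.1 hc).2)]
        rw [hsame]
        have hfact : ((cntB n m l V (blockOf l m (j : ℕ)) + 1).factorial : ℝ)
            = ((cntB n m l V (blockOf l m (j : ℕ)) : ℝ) + 1)
                * ((cntB n m l V (blockOf l m (j : ℕ))).factorial : ℝ) := by
          rw [Nat.factorial_succ]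
          push_cast
          ring
        rw [hfact]
        have hne1 : ((cntB n m l V (blockOf l m (j : ℕ))).factorial : ℝ) ≠ 0 :=
          Nat.cast_ne_zero.2 (Nat.factorial_ne_zero _)
        have hne2 : ((cntB n m l V (blockOf l m (j : ℕ)) : ℝ) + 1) ≠ 0 := by positivity
        field_simp
    · push_neg at hall
      obtain ⟨p, hpV, hpb⟩ := hall
      refine ⟨fun hsorted =>
        absurd ((List.pairwise_cons.1 hsorted).1 p hpV) (by omega), fun _ => ?_⟩
      rw [h1]
      have hzero : (fun s => fV s * hB m (blockOf l m (j : ℕ)) s) = fun _ => (0:ℝ) := by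
        funext s
        by_cases hmem : s ∈ Set.Ico ((blockOf l m (j : ℕ) : ℝ) / (m : ℝ))
            (((blockOf l m (j : ℕ) : ℝ) + 1) / (m : ℝ))
        · have hfV0 : fV s = 0 := by
            apply Finset.prod_eq_zero (Finset.mem_range.2 (blockOf_lt l hm hsum p.isLt))
            have hg0 : gB m (blockOf l m (p : ℕ)) s = 0 := by
              apply gB_eq_zero
              have hs2 : (m : ℝ) * s < (blockOf l m (j : ℕ) : ℝ) + 1 :=
                (lt_div_iff₀' hM).1 hmem.2
              have : (blockOf l m (j : ℕ) : ℝ) + 1 ≤ (blockOf l m (p : ℕ) : ℝ) := by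
                exact_mod_cast hpb
              linarith
            have hcount : cntB n m l V (blockOf l m (p : ℕ)) ≠ 0 := by
              unfold cntB
              rw [Ne, List.countP_eq_zero]
              push_neg
              exact ⟨p, hpV, by simp⟩
            rw [hg0, zero_pow hcount, zero_div]
          rw [hfV0, zero_mul]
        · rw [show hB m (blockOf l m (j : ℕ)) s = 0 from Set.indicator_of_notMem hmem _,
            mul_zero]
      rw [hzero]
      simp

lemma sorted_iff (n m : ℕ) (l : ℕ → ℕ)
    (J : Fin n → Fin n) (hJ : (List.ofFn J).Perm (List.finRange n)) :
    (List.ofFn J).Pairwise (fun p q : Fin n => blockOf l m p.val ≤ blockOf l m q.val)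
      ↔ ∀ k : Fin n, blockOf l m ((J k : ℕ)) = blockOf l m (k : ℕ) := by
  constructor
  · intro hs
    set f : Fin n → ℕ := fun q => blockOf l m (q : ℕ) with hfdef
    have hmap : ((List.ofFn J).map f).Perm ((List.finRange n).map f) := hJ.map f
    have hs1 : ((List.ofFn J).map f).Pairwise (· ≤ ·) := List.pairwise_map.2 hs
    have hs2 : ((List.finRange n).map f).Pairwise (· ≤ ·) := by
      apply List.pairwise_map.2
      rw [show List.finRange n = List.ofFn (fun i => i) from rfl, List.pairwise_ofFn]
      intro i j hij
      exact blockOf_mono l m (le_of_lt hij)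
    have heq := hmap.eq_of_pairwise' hs1 hs2
    rw [List.map_ofFn, show List.finRange n = List.ofFn (fun i => i) from rfl,
      List.map_ofFn] at heq
    have := List.ofFn_inj.1 heq
    intro k
    exact congrFun this k
  · intro hcond
    rw [List.pairwise_ofFn]
    intro i j hij
    rw [hcond i, hcond j]
    exact blockOf_mono l m (le_of_lt hij)

lemma cnt_perm (n m : ℕ) (hm : 1 ≤ m) (l : ℕ → ℕ) (hsum : blockPartialSum l m = n)
    (J : Fin n → Fin n) (hJ : (List.ofFn J).Perm (List.finRange n))
    {c : ℕ} (hc : c < m) : cntB n m l (List.ofFn J) c = l c := by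
  unfold cntB
  rw [hJ.countP_eq]
  have h1 : (List.finRange n).countP (fun q : Fin n => decide (blockOf l m (q : ℕ) = c))
      = (List.range n).countP (fun q => decide (blockOf l m q = c)) := by
    rw [show List.range n = (List.finRange n).map Fin.val from List.ext_getElem (by simp) (by simp), List.countP_map]
    rfl
  have h2 : (List.range n).countP (fun q => decide (blockOf l m q = c))
      = ((Finset.range n).filter (fun q => blockOf l m q = c)).card := by
    rw [List.countP_eq_length_filter]
    rfl
  rw [h1, h2, blockOf_count l hm hsum hc]

end RSAux

/-- for the block path `z = exp(v₁)*⋯*exp(vₘ)` with block lengths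
`l₁,…,lₘ` summing to `n`, and any word `J` that is a permutation of `(1,…,n)`,
`S(z)^J = 1/(l₁!⋯lₘ!)` if `J` is a concatenation `J₁*⋯*Jₘ` with each `Jᵢ` a
permutation of the `i`-th block (equivalently, each position stays within its
block), and `S(z)^J = 0` otherwise. -/
theorem block_concat_path_sig_coeffs (n m : ℕ) (hm : 1 ≤ m) (l : ℕ → ℕ)
    (hl : ∀ i < m, 1 ≤ l i) (hsum : blockPartialSum l m = n)
    (J : Fin n → Fin n) (hJ : (List.ofFn J).Perm (List.finRange n)) :
    sigCoeff (blockConcatPath l m n) 0 (List.ofFn J) 1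
      = if ∀ k : Fin n, blockOf l m ((J k : ℕ)) = blockOf l m (k : ℕ)
        then (∏ i ∈ Finset.range m, (Nat.factorial (l i) : ℝ))⁻¹
        else 0 := by

  classical
  have hrev : (List.ofFn J).reverse.Pairwise
      (fun p q : Fin n => blockOf l m q.val ≤ blockOf l m p.val)
      ↔ (List.ofFn J).Pairwise (fun p q : Fin n => blockOf l m p.val ≤ blockOf l m q.val) :=
    List.pairwise_reverse
  have hkey := sig_key n m hm l hsum ((List.ofFn J).reverse) 1 zero_le_one
  have hcoeff : sigCoeff (blockConcatPath l m n) 0 (List.ofFn J) 1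
      = sigAux (blockConcatPath l m n) 0 ((List.ofFn J).reverse) 1 := rfl
  by_cases hcond : ∀ k : Fin n, blockOf l m ((J k : ℕ)) = blockOf l m (k : ℕ)
  · rw [if_pos hcond, hcoeff,
      hkey.1 (hrev.2 ((sorted_iff n m l J hJ).2 hcond))]
    have hfac : ∀ c ∈ Finset.range m,
        (gB m c 1) ^ (cntB n m l ((List.ofFn J).reverse) c)
          / ((cntB n m l ((List.ofFn J).reverse) c).factorial : ℝ)
          = ((Nat.factorial (l c) : ℝ))⁻¹ := by
      intro c hc
      have hcm : c < m := Finset.mem_range.1 hc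
      have hcnt : cntB n m l ((List.ofFn J).reverse) c = l c := by
        unfold cntB
        rw [List.countP_reverse]
        exact cnt_perm n m hm l hsum J hJ hcm
      have hg1 : gB m c 1 = 1 := by
        apply gB_eq_one
        rw [mul_one]
        exact_mod_cast hcm
      rw [hcnt, hg1, one_pow, one_div]
    rw [Finset.prod_congr rfl hfac, Finset.prod_inv_distrib]
  · rw [if_neg hcond, hcoeff]
    exact hkey.2 (fun hs => hcond ((sorted_iff n m l J hJ).1 (hrev.1 hs)))
end
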